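/- arXiv:1703.10013 — 11 statements merged into one kernel-verified Lean document; each statement's English description precedes it below -/
import Mathlib

section
/- Let G be a group acting by homeomorphisms on a compact metric space X. If there exists a finite subset F ⊆ G and an expansive constant ε > 0 for the action such that F ε-codes all of G, then X is finite. -/
/-! By expansiveness and coding, two distinct points are already `ε`-separated by some element
of the finite set `F`. Hence each point `x` is the only point of the open set
`⋂ h ∈ F, {y | dist (h • x) (h • y) < ε}`, so `X` is discrete, and a compact discrete space
is finite. -/

open Metric

theorem discreteTopology_of_finset_separating {ι X Y : Type*} [TopologicalSpace X]
    [PseudoMetricSpace Y] {f : ι → X → Y} {s : Finset ι} (hf : ∀ i ∈ s, Continuous (f i))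
    {ε : ℝ} (hε : 0 < ε) (hsep : ∀ x y, x ≠ y → ∃ i ∈ s, ε ≤ dist (f i x) (f i y)) :
    DiscreteTopology X := by
  refine discreteTopology_iff_isOpen_singleton.mpr fun x => ?_
  have hsingleton : {x} = ⋂ i ∈ s, f i ⁻¹' ball (f i x) ε := by
    ext y
    simp only [Set.mem_singleton_iff, Set.mem_iInter, Set.mem_preimage, mem_ball']
    refine ⟨fun hyx i _ => hyx ▸ dist_self (f i y) ▸ hε, fun hy => ?_⟩
    by_contra hyx
    obtain ⟨i, hi, hle⟩ := hsep x y (Ne.symm hyx)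
    exact (hy i hi).not_ge hle
  rw [hsingleton]
  exact isOpen_biInter_finset fun i hi => isOpen_ball.preimage (hf i hi)

theorem exists_mem_lt_dist_smul_of_codes {G X : Type*} [SMul G X] [PseudoMetricSpace X] {ε : ℝ}
    (hexp : ∀ x y : X, x ≠ y → ∃ g : G, ε < dist (g • x) (g • y)) {F : Finset G}
    (hcode : ∀ x y : X, (∀ h ∈ F, dist (h • x) (h • y) ≤ ε) →
      ∀ g : G, dist (g • x) (g • y) < ε)
    {x y : X} (hxy : x ≠ y) : ∃ h ∈ F, ε < dist (h • x) (h • y) := by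
  by_contra! hF
  obtain ⟨g, hg⟩ := hexp x y hxy
  exact (hcode x y hF g).not_gt hg

theorem stmt_1 {G X : Type*} [Group G] [MetricSpace X] [CompactSpace X]
    [MulAction G X] (hc : ∀ g : G, Continuous fun x : X => g • x)
    (ε : ℝ) (hε : 0 < ε)
    (hexp : ∀ x y : X, x ≠ y → ∃ g : G, ε < dist (g • x) (g • y))
    (F : Finset G)
    (hcode : ∀ x y : X, (∀ h ∈ F, dist (h • x) (h • y) ≤ ε) →
      ∀ g : G, dist (g • x) (g • y) < ε) :
    Finite X := by
  have : DiscreteTopology X :=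
    discreteTopology_of_finset_separating (fun g _ => hc g) hε fun x y hxy =>
      (exists_mem_lt_dist_smul_of_codes hexp hcode hxy).imp fun _ ⟨hh, hlt⟩ => ⟨hh, hlt.le⟩
  exact finite_of_compact_of_discrete
end

section
/- Let G be an infinite finitely generated group with finite symmetric generating set S containing 1. Then there exists an S-horoball: a subset H ⊆ G that is a limit in the topology of pointwise convergence (on {0,1}^G) of balls S^{r_n} g_n with r_n → ∞, such that both H and its complement are nonempty. -/
/-- The ball of radius `r` centered at `g` in the left Cayley graph:
`S^r g = {s₁ ⋯ s_r g : sᵢ ∈ S}`. -/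
def ballS {G : Type*} [Group G] (S : Set G) (r : ℕ) (g : G) : Set G :=
  {x | ∃ l : List G, l.length = r ∧ (∀ s ∈ l, s ∈ S) ∧ x = l.prod * g}

namespace HoroballAux
open scoped Pointwise

variable {G : Type*} [Group G]

/-- Products of `n` elements of `S`. -/
def Q (S : Finset G) (n : ℕ) : Set G :=
  {x | ∃ l : List G, l.length = n ∧ (∀ s ∈ l, s ∈ S) ∧ x = l.prod}

lemma mem_ballS {S : Finset G} {r : ℕ} {g x : G} :
    x ∈ ballS (S : Set G) r g ↔ x * g⁻¹ ∈ Q S r := by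
  constructor
  · rintro ⟨l, hl, hm, rfl⟩
    exact ⟨l, hl, fun s hs => hm s hs, by group⟩
  · rintro ⟨l, hl, hm, h⟩
    refine ⟨l, hl, fun s hs => hm s hs, ?_⟩
    have : x * g⁻¹ * g = l.prod * g := by rw [← h]
    simpa using this

lemma one_mem_Q_zero (S : Finset G) : (1 : G) ∈ Q S 0 :=
  ⟨[], rfl, by simp, by simp⟩

lemma Q_subset_succ {S : Finset G} (h1 : (1 : G) ∈ S) (n : ℕ) :
    Q S n ⊆ Q S (n + 1) := by
  rintro x ⟨l, hl, hm, rfl⟩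
  refine ⟨1 :: l, by simp [hl], ?_, by simp⟩
  intro s hs
  rcases List.mem_cons.mp hs with h | h
  · simpa [h] using h1
  · exact hm s h

lemma Q_monotone {S : Finset G} (h1 : (1 : G) ∈ S) : Monotone (Q S) :=
  monotone_nat_of_le_succ (Q_subset_succ h1)

lemma Q_mul {S : Finset G} {m n : ℕ} {x y : G}
    (hx : x ∈ Q S m) (hy : y ∈ Q S n) : x * y ∈ Q S (m + n) := by
  obtain ⟨l1, hl1, hm1, rfl⟩ := hx
  obtain ⟨l2, hl2, hm2, rfl⟩ := hy
  refine ⟨l1 ++ l2, by simp [hl1, hl2], ?_, by simp⟩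
  intro s hs
  rcases List.mem_append.mp hs with h | h
  · exact hm1 s h
  · exact hm2 s h

lemma Q_inv {S : Finset G} (hsym : ∀ s ∈ S, s⁻¹ ∈ S) {n : ℕ} {x : G}
    (hx : x ∈ Q S n) : x⁻¹ ∈ Q S n := by
  obtain ⟨l, hl, hm, rfl⟩ := hx
  refine ⟨(l.map fun y => y⁻¹).reverse, by simp [hl], ?_, (List.prod_inv_reverse l)⟩
  intro s hs
  simp only [List.mem_reverse, List.mem_map] at hs
  obtain ⟨y, hy, rfl⟩ := hs
  exact hsym y (hm y hy)

lemma Q_succ_eq (S : Finset G) (n : ℕ) :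
    Q S (n + 1) = (S : Set G) * Q S n := by
  ext x
  constructor
  · rintro ⟨l, hl, hm, rfl⟩
    cases l with
    | nil => simp at hl
    | cons a l' =>
      refine ⟨a, hm a (by simp), l'.prod, ⟨l', by simpa using hl,
        fun s hs => hm s (List.mem_cons_of_mem a hs), rfl⟩, by simp⟩
  · rintro ⟨a, ha, y, ⟨l, hl, hm, rfl⟩, rfl⟩
    refine ⟨a :: l, by simp [hl], ?_, by simp⟩
    intro s hs
    rcases List.mem_cons.mp hs with h | h
    · simpa [h] using ha
    · exact hm s h

lemma Q_finite (S : Finset G) (n : ℕ) : (Q S n).Finite := by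
  induction n with
  | zero =>
    refine Set.Finite.subset (Set.finite_singleton 1) ?_
    rintro x ⟨l, hl, -, rfl⟩
    simp [List.length_eq_zero_iff.mp hl]
  | succ n ih =>
    rw [Q_succ_eq]
    exact (S.finite_toSet).mul ih

lemma exists_mem_Q {S : Finset G} (h1 : (1 : G) ∈ S)
    (hsym : ∀ s ∈ S, s⁻¹ ∈ S) (hgen : Subgroup.closure (S : Set G) = ⊤)
    (x : G) : ∃ n, x ∈ Q S n := by
  have hx : x ∈ Subgroup.closure (S : Set G) := by rw [hgen]; trivial
  induction hx using Subgroup.closure_induction with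
  | mem s hs => exact ⟨1, ⟨[s], rfl, by simpa using hs, by simp⟩⟩
  | one => exact ⟨0, one_mem_Q_zero S⟩
  | mul a b _ _ iha ihb =>
    obtain ⟨m, hm⟩ := iha
    obtain ⟨n, hn⟩ := ihb
    exact ⟨m + n, Q_mul hm hn⟩
  | inv a _ iha =>
    obtain ⟨n, hn⟩ := iha
    exact ⟨n, Q_inv hsym hn⟩

lemma exists_new {G : Type*} [Group G] [Infinite G] {S : Finset G}
    (h1 : (1 : G) ∈ S) (hsym : ∀ s ∈ S, s⁻¹ ∈ S)
    (hgen : Subgroup.closure (S : Set G) = ⊤) (n : ℕ) :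
    ∃ c, c ∈ Q S (n + 1) ∧ c ∉ Q S n := by
  by_contra h
  push_neg at h
  have hsub : Q S (n + 1) ⊆ Q S n := fun c hc => h c hc
  have hstep : ∀ m, Q S (n + m) ⊆ Q S n := by
    intro m
    induction m with
    | zero => exact le_refl _
    | succ m ih =>
      have : Q S (n + (m + 1)) = (S : Set G) * Q S (n + m) := by
        rw [← Q_succ_eq]; ring_nf
      rw [this]
      refine subset_trans ?_ hsub
      rw [Q_succ_eq]
      exact Set.mul_subset_mul_left ih
  have huniv : (Set.univ : Set G) ⊆ Q S n := by
    intro x _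
    obtain ⟨m, hm⟩ := exists_mem_Q h1 hsym hgen x
    exact hstep m (Q_monotone h1 (Nat.le_add_left m n) hm)
  exact Set.infinite_univ ((Q_finite S n).subset huniv)

lemma decomp {S : Finset G} {n : ℕ} {c : G} (hc : c ∈ Q S (n + 1)) :
    ∃ a p, a ∈ S ∧ p ∈ Q S n ∧ c = p * a := by
  obtain ⟨l, hl, hm, rfl⟩ := hc
  have hne : l ≠ [] := by
    intro h; rw [h] at hl; simp at hl
  refine ⟨l.getLast hne, l.dropLast.prod, hm _ (List.getLast_mem hne),
    ⟨l.dropLast, by simp [hl], fun s hs => hm s (List.dropLast_subset l hs), rfl⟩, ?_⟩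
  conv_lhs => rw [← List.dropLast_append_getLast hne]
  simp

end HoroballAux

open HoroballAux Filter in
theorem stmt_2 {G : Type*} [Group G] [Infinite G] (S : Finset G)
    (h1 : (1 : G) ∈ S) (hsym : ∀ s ∈ S, s⁻¹ ∈ S)
    (hgen : Subgroup.closure (S : Set G) = ⊤) :
    ∃ (H : Set G) (r : ℕ → ℕ) (c : ℕ → G),
      Filter.Tendsto r Filter.atTop Filter.atTop ∧
      (∀ g : G, ∀ᶠ n in Filter.atTop, (g ∈ ballS (S : Set G) (r n) (c n) ↔ g ∈ H)) ∧
      H.Nonempty ∧ Hᶜ.Nonempty := by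
  classical
  -- G is countable
  haveI : Countable G := by
    have hcov : (Set.univ : Set G) ⊆ ⋃ n, Q S n := by
      intro x _
      obtain ⟨n, hn⟩ := exists_mem_Q h1 hsym hgen x
      exact Set.mem_iUnion.2 ⟨n, hn⟩
    have : (Set.univ : Set G).Countable :=
      ((Set.countable_iUnion fun n => (Q_finite S n).countable).mono hcov)
    exact Set.countable_univ_iff.mp this
  -- choose boundary elements
  choose c hc1 hc0 using exists_new h1 hsym hgen (S := S)
  choose a p ha hp hcp using fun n => decomp (hc1 n)
  -- key membership facts
  have K1 : ∀ n, a n ∈ ballS (S : Set G) n (c n) := by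
    intro n
    rw [mem_ballS]
    have : a n * (c n)⁻¹ = (p n)⁻¹ := by rw [hcp n]; group
    rw [this]
    exact Q_inv hsym (hp n)
  have K2 : ∀ n, (1 : G) ∉ ballS (S : Set G) n (c n) := by
    intro n hmem
    rw [mem_ballS, one_mul] at hmem
    exact hc0 n (by simpa using Q_inv hsym hmem)
  -- pigeonhole: a constant last letter along an infinite set
  obtain ⟨t, ht⟩ := Finite.exists_infinite_fiber (fun n => (⟨a n, ha n⟩ : {x // x ∈ S}))
  have hPinf : {n | (⟨a n, ha n⟩ : {x // x ∈ S}) = t}.Infinite := by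
    rw [← Set.infinite_coe_iff]
    exact ht
  set P : ℕ → Prop := fun n => (⟨a n, ha n⟩ : {x // x ∈ S}) = t with hP
  have hψmono : StrictMono (Nat.nth P) := Nat.nth_strictMono hPinf
  have hψP : ∀ n, a (Nat.nth P n) = (t : G) := by
    intro n
    have := Nat.nth_mem_of_infinite hPinf n
    exact congrArg Subtype.val this
  -- compactness extraction
  set u : ℕ → (G → Bool) :=
    fun n g => decide (g ∈ ballS (S : Set G) (Nat.nth P n) (c (Nat.nth P n))) with hu
  obtain ⟨f, -, φ, hφ, hconv⟩ :=
    (isCompact_univ : IsCompact (Set.univ : Set (G → Bool))).tendsto_subseq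
      (fun n => Set.mem_univ (u n))
  have hconv' : ∀ g : G, ∀ᶠ n in atTop, u (φ n) g = f g := by
    intro g
    have h := tendsto_pi_nhds.mp hconv g
    rw [nhds_discrete, Filter.tendsto_pure] at h
    exact h
  refine ⟨{g | f g = true}, fun n => Nat.nth P (φ n), fun n => c (Nat.nth P (φ n)),
    (hψmono.comp hφ).tendsto_atTop, ?_, ?_, ?_⟩
  · intro g
    filter_upwards [hconv' g] with n hn
    constructor
    · intro hmem
      have : u (φ n) g = true := by simp [hu, hmem]
      rw [hn] at this
      exact this
    · intro hg
      have : u (φ n) g = true := by rw [hn]; exact hg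
      simpa [hu] using this
  · refine ⟨(t : G), ?_⟩
    have hev : ∀ᶠ n in atTop, u (φ n) (t : G) = f (t : G) := hconv' (t : G)
    obtain ⟨n, hn⟩ := hev.exists
    have : u (φ n) (t : G) = true := by
      have := K1 (Nat.nth P (φ n))
      rw [hψP (φ n)] at this
      simp [hu, this]
    rw [hn] at this
    exact this
  · refine ⟨(1 : G), ?_⟩
    have hev : ∀ᶠ n in atTop, u (φ n) (1 : G) = f (1 : G) := hconv' (1 : G)
    obtain ⟨n, hn⟩ := hev.exists
    have : u (φ n) (1 : G) = false := by
      simp [hu, K2 (Nat.nth P (φ n))]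
    rw [hn] at this
    simp [Set.mem_compl_iff, this]
end

section
/- Let G be a finitely generated group with finite symmetric generating set S containing 1, and let H ⊆ G be an S-horoball. Then for every R > 0 there exists h̃ ∈ G such that the ball S^R h̃ is contained in H. That is, every S-horoball contains arbitrarily large balls. -/
lemma ballS_concat {G : Type*} [Group G] (S : Set G) {a b : ℕ} {x h g : G}
    (hx : x ∈ ballS S a h) (hh : h ∈ ballS S b g) : x ∈ ballS S (a + b) g := by
  obtain ⟨l, hl, hls, rfl⟩ := hx
  obtain ⟨m, hm, hms, rfl⟩ := hh
  refine ⟨l ++ m, by simp [hl, hm], ?_, by simp [mul_assoc]⟩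
  intro s hs
  rcases List.mem_append.1 hs with h | h
  exacts [hls s h, hms s h]

lemma ballS_finite {G : Type*} [Group G] (S : Finset G) (k : ℕ) (g : G) :
    (ballS (S : Set G) k g).Finite := by
  induction k generalizing g with
  | zero =>
    refine (Set.finite_singleton g).subset ?_
    rintro x ⟨l, hl, -, rfl⟩
    simp [List.length_eq_zero_iff.1 hl]
  | succ k ih =>
    have hsub : ballS (S : Set G) (k + 1) g ⊆
        ⋃ s ∈ (S : Set G), (fun y => s * y) '' ballS (S : Set G) k g := by
      rintro x ⟨l, hl, hls, rfl⟩
      cases l with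
      | nil => simp at hl
      | cons a t =>
        exact Set.mem_biUnion (hls a (by simp))
          ⟨t.prod * g, ⟨t, by simpa using hl, fun s hs => hls s (by simp [hs]), rfl⟩,
            by simp [mul_assoc]⟩
    exact (Set.Finite.biUnion S.finite_toSet (fun s _ => (ih g).image _)).subset hsub

lemma ballS_split {G : Type*} [Group G] (S : Finset G) (hsym : ∀ s ∈ S, s⁻¹ ∈ S)
    {R n : ℕ} (hRn : R ≤ n) {g c : G} (hg : g ∈ ballS (S : Set G) n c) :
    ∃ h, h ∈ ballS (S : Set G) R g ∧ h ∈ ballS (S : Set G) (n - R) c := by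
  obtain ⟨l, hl, hls, rfl⟩ := hg
  refine ⟨(l.drop R).prod * c, ⟨((l.take R).map (·⁻¹)).reverse, ?_, ?_, ?_⟩,
    ⟨l.drop R, by simp [hl], fun s hs => hls s (List.mem_of_mem_drop hs), rfl⟩⟩
  · simp [hl, hRn]
  · intro s hs
    simp only [List.mem_reverse, List.mem_map] at hs
    obtain ⟨t, ht, rfl⟩ := hs
    exact hsym t (hls t (List.mem_of_mem_take ht))
  · rw [← List.prod_inv_reverse]
    have : l.prod = (l.take R).prod * (l.drop R).prod := by
      rw [← List.prod_append, List.take_append_drop]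
    rw [this, mul_assoc, ← mul_assoc ((l.take R).prod)⁻¹, inv_mul_cancel, one_mul]

theorem stmt_3 {G : Type*} [Group G] (S : Finset G)
    (h1 : (1 : G) ∈ S) (hsym : ∀ s ∈ S, s⁻¹ ∈ S)
    (hgen : Subgroup.closure (S : Set G) = ⊤)
    (H : Set G) (r : ℕ → ℕ) (c : ℕ → G)
    (hr : Filter.Tendsto r Filter.atTop Filter.atTop)
    (hlim : ∀ g : G, ∀ᶠ n in Filter.atTop, (g ∈ ballS (S : Set G) (r n) (c n) ↔ g ∈ H))
    (hne : H.Nonempty) (hnc : Hᶜ.Nonempty) :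
    ∀ R : ℕ, ∃ h : G, ballS (S : Set G) R h ⊆ H := by
  intro R
  obtain ⟨g, hg⟩ := hne
  have hPfin := ballS_finite S (R + R) g
  have hev : ∀ᶠ n in Filter.atTop,
      ∀ p ∈ ballS (S : Set G) (R + R) g,
        (p ∈ ballS (S : Set G) (r n) (c n) ↔ p ∈ H) :=
    (Filter.eventually_all_finite hPfin).2 (fun p _ => hlim p)
  obtain ⟨n, hn1, hn2, hn3⟩ :=
    (hev.and ((hlim g).and (hr.eventually_ge_atTop R))).exists
  have hgball : g ∈ ballS (S : Set G) (r n) (c n) := hn2.mpr hg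
  obtain ⟨h, hh1, hh2⟩ := ballS_split S hsym hn3 hgball
  refine ⟨h, fun x hx => ?_⟩
  have hx2 : x ∈ ballS (S : Set G) (R + R) g := ballS_concat _ hx hh1
  have hxball : x ∈ ballS (S : Set G) (R + (r n - R)) (c n) := ballS_concat _ hx hh2
  rw [Nat.add_sub_cancel' hn3] at hxball
  exact (hn1 x hx2).mp hxball
end

section
/- Let G be a group generated by a finite set S (with 1 ∈ S) acting on a compact metric space X, and let ε > 0. The ε-coding relation satisfies: if S^r ε-codes S^{r+1} for some r > 0, then S^r ε-codes G. -/
/-!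
Coding is preserved by right translation and is transitive. Every element of `S^(n+1)`,
`n ≥ r + 1`, lies in `S^(r+1) t` for some `t ∈ S^(n-r)`; the translate `S^r t` lies in `S^n`,
so by induction `S^r` codes `S^r t`, which codes `S^(r+1) t` by translating the hypothesis.
-/

def Codes {G : Type*} (X : Type*) [Monoid G] [MulAction G X] [Dist X] (ε : ℝ) (A B : Set G) :
    Prop :=
  ∀ x y : X, (∀ h ∈ A, dist (h • x) (h • y) ≤ ε) → ∀ g ∈ B, dist (g • x) (g • y) < ε

namespace Codes

variable {G X : Type*} [Monoid G] [MulAction G X] [Dist X] {ε : ℝ} {A B C : Set G}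

theorem mono_right (h : Codes X ε A B) (hCB : C ⊆ B) : Codes X ε A C :=
  fun x y hxy g hg => h x y hxy g (hCB hg)

theorem trans (hAB : Codes X ε A B) (hBC : Codes X ε B C) : Codes X ε A C :=
  fun x y hxy => hBC x y fun h hh => (hAB x y hxy h hh).le

theorem image_mul_right (h : Codes X ε A B) (t : G) :
    Codes X ε ((· * t) '' A) ((· * t) '' B) := by
  rintro x y hxy _ ⟨g, hg, rfl⟩
  simp only [Set.forall_mem_image, mul_smul] at hxy ⊢
  exact h (t • x) (t • y) hxy g hg

end Codes

section ballS

variable {G : Type*} [Group G] {S : Set G}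

theorem ballS_eq_image_mul_right (r : ℕ) (g : G) : ballS S r g = (· * g) '' ballS S r 1 := by
  ext x
  simp only [ballS, Set.mem_ofPred_eq, Set.mem_image, mul_one]
  constructor
  · rintro ⟨l, hl, hlS, rfl⟩
    exact ⟨l.prod, ⟨l, hl, hlS, rfl⟩, rfl⟩
  · rintro ⟨_, ⟨l, hl, hlS, rfl⟩, rfl⟩
    exact ⟨l, hl, hlS, rfl⟩

theorem ballS_mono (h1 : (1 : G) ∈ S) {m n : ℕ} (hmn : m ≤ n) : ballS S m 1 ⊆ ballS S n 1 := by
  rintro _ ⟨l, rfl, hlS, rfl⟩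
  refine ⟨l ++ List.replicate (n - l.length) 1, by simp [hmn], ?_, by simp⟩
  simp only [List.mem_append]
  rintro s (hs | hs)
  · exact hlS s hs
  · rwa [List.eq_of_mem_replicate hs]

theorem ballS_subset_ballS_add {m n : ℕ} {t : G} (ht : t ∈ ballS S n 1) :
    ballS S m t ⊆ ballS S (m + n) 1 := by
  obtain ⟨lt, rfl, hltS, rfl⟩ := ht
  rintro _ ⟨l, rfl, hlS, rfl⟩
  refine ⟨l ++ lt, by simp, ?_, by simp⟩
  simp only [List.mem_append]
  rintro s (hs | hs)
  exacts [hlS s hs, hltS s hs]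

theorem exists_mem_ballS_of_mem_ballS_add {m n : ℕ} {g : G} (hg : g ∈ ballS S (m + n) 1) :
    ∃ t ∈ ballS S n 1, g ∈ ballS S m t := by
  obtain ⟨l, hl, hlS, rfl⟩ := hg
  refine ⟨(l.drop m).prod * 1, ⟨l.drop m, by simp [hl], fun s hs => hlS s (List.mem_of_mem_drop hs),
    rfl⟩, l.take m, by simp [hl], fun s hs => hlS s (List.mem_of_mem_take hs), ?_⟩
  rw [mul_one, mul_one, ← List.prod_append, List.take_append_drop]

end ballS

theorem Codes.ballS_of_ballS_succ {G X : Type*} [Group G] [MulAction G X] [Dist X] {ε : ℝ}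
    {S : Set G} (h1 : (1 : G) ∈ S) {r : ℕ}
    (hcode : Codes X ε (ballS S r 1) (ballS S (r + 1) 1)) (n : ℕ) :
    Codes X ε (ballS S r 1) (ballS S n 1) := by
  have codes_of_le : ∀ n, r + 1 ≤ n → Codes X ε (ballS S r 1) (ballS S n 1) := by
    intro n hn
    induction n, hn using Nat.le_induction with
    | base => exact hcode
    | succ n hn ih =>
      intro x y hxy g hg
      rw [show n + 1 = (r + 1) + (n - r) by omega] at hg
      obtain ⟨t, ht, hgt⟩ := exists_mem_ballS_of_mem_ballS_add hg
      have codes_translate : Codes X ε (ballS S r 1) (ballS S r t) :=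
        ih.mono_right <| (ballS_subset_ballS_add ht).trans (by rw [show r + (n - r) = n by omega])
      have translate_codes : Codes X ε (ballS S r t) (ballS S (r + 1) t) := by
        simpa only [← ballS_eq_image_mul_right] using hcode.image_mul_right t
      exact codes_translate.trans translate_codes x y hxy g hgt
  exact (codes_of_le (max n (r + 1)) (le_max_right _ _)).mono_right
    (ballS_mono h1 (le_max_left _ _))

theorem stmt_4_general {G X : Type*} [Group G] [MetricSpace X] [MulAction G X]
    (S : Finset G) (h1 : (1 : G) ∈ S)
    (hgen : ∀ g : G, ∃ n : ℕ, g ∈ ballS (S : Set G) n 1)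
    (ε : ℝ) (r : ℕ)
    (hcode : ∀ x y : X, (∀ h ∈ ballS (S : Set G) r 1, dist (h • x) (h • y) ≤ ε) →
      ∀ g ∈ ballS (S : Set G) (r + 1) 1, dist (g • x) (g • y) < ε) :
    ∀ x y : X, (∀ h ∈ ballS (S : Set G) r 1, dist (h • x) (h • y) ≤ ε) →
      ∀ g : G, dist (g • x) (g • y) < ε := by
  intro x y hxy g
  obtain ⟨n, hn⟩ := hgen g
  exact Codes.ballS_of_ballS_succ (X := X) h1 hcode n x y hxy g hn

theorem stmt_4 {G X : Type*} [Group G] [MetricSpace X] [CompactSpace X] [MulAction G X]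
    (hc : ∀ g : G, Continuous fun x : X => g • x)
    (S : Finset G) (h1 : (1 : G) ∈ S)
    (hgen : ∀ g : G, ∃ n : ℕ, g ∈ ballS (S : Set G) n 1)
    (ε : ℝ) (hε : 0 < ε) (r : ℕ) (hr : 0 < r)
    (hcode : ∀ x y : X, (∀ h ∈ ballS (S : Set G) r 1, dist (h • x) (h • y) ≤ ε) →
      ∀ g ∈ ballS (S : Set G) (r + 1) 1, dist (g • x) (g • y) < ε) :
    ∀ x y : X, (∀ h ∈ ballS (S : Set G) r 1, dist (h • x) (h • y) ≤ ε) →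
      ∀ g : G, dist (g • x) (g • y) < ε :=
  stmt_4_general S h1 hgen ε r hcode
end

section
/- Let G be a finitely generated group acting expansively and pointwise periodically by homeomorphisms on a compact metric space X. Then X is finite. -/
open MulAction Metric Set


lemma aux_homs_finite {G H : Type*} [Group G] [Group.FG G] [Group H] [Finite H] :
    Finite (G →* H) := by
  obtain ⟨S, hScl, hSfin⟩ := Group.fg_iff.mp ‹Group.FG G›
  haveI := hSfin.to_subtype
  have hinj : Function.Injective (fun (φ : G →* H) (s : S) => φ s.1) := by
    intro φ ψ h
    ext x
    have hx : x ∈ Subgroup.closure S := by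
      rw [hScl]; exact Subgroup.mem_top x
    induction hx using Subgroup.closure_induction with
    | mem y hy => exact congrFun h ⟨y, hy⟩
    | one => simp
    | mul a b _ _ ha hb => simp [map_mul, ha, hb]
    | inv a _ ha => simp [map_inv, ha]
  exact Finite.of_injective _ hinj

lemma aux_K_fixes {G X : Type*} [Group G] [MulAction G X]
    (x : X) (hfin : (MulAction.orbit G x).Finite) :
    ∃ n : ℕ, ∀ k : G, (k ∈ ⨅ φ : G →* Equiv.Perm (Fin n), φ.ker) → k • x = x := by
  haveI := hfin.to_subtype
  set n := Nat.card ↥(orbit G x) with hn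
  let e : ↥(orbit G x) ≃ Fin n := Finite.equivFin _
  have hsm : ∀ (g : G) (y : X), y ∈ orbit G x → g • y ∈ orbit G x := by
    intro g y hy
    obtain ⟨h, rfl⟩ := hy
    exact MulAction.mem_orbit_iff.mpr ⟨g * h, by rw [mul_smul]⟩
  let act : G → ↥(orbit G x) → ↥(orbit G x) := fun g y => ⟨g • y.1, hsm g y.1 y.2⟩
  have act_mul : ∀ (g h : G) (y), act (g * h) y = act g (act h y) := by
    intro g h y
    apply Subtype.ext
    show (g * h) • y.1 = g • (h • y.1)
    rw [mul_smul]
  have act_one : ∀ y, act 1 y = y := fun y => Subtype.ext (one_smul G y.1)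
  let permOf : G → Equiv.Perm ↥(orbit G x) := fun g =>
    { toFun := act g
      invFun := act g⁻¹
      left_inv := fun y => by rw [← act_mul, inv_mul_cancel, act_one]
      right_inv := fun y => by rw [← act_mul, mul_inv_cancel, act_one] }
  let φ : G →* Equiv.Perm (Fin n) :=
    { toFun := fun g => (e.symm.trans (permOf g)).trans e
      map_one' := by
        apply Equiv.ext
        intro i
        show e (act 1 (e.symm i)) = i
        rw [act_one, Equiv.apply_symm_apply]
      map_mul' := by
        intro g h
        apply Equiv.ext
        intro i
        show e (act (g * h) (e.symm i)) = e (act g (e.symm (e (act h (e.symm i)))))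
        rw [Equiv.symm_apply_apply, act_mul]
      }
  refine ⟨n, fun k hk => ?_⟩
  have hker : φ k = 1 := Subgroup.mem_iInf.mp hk φ
  have h3 : e ((permOf k) (e.symm (e ⟨x, mem_orbit_self x⟩))) = e ⟨x, mem_orbit_self x⟩ := by
    have := congrArg (fun p : Equiv.Perm (Fin n) => p (e ⟨x, mem_orbit_self x⟩)) hker
    exact this
  have h4 : (permOf k) ⟨x, mem_orbit_self x⟩ = ⟨x, mem_orbit_self x⟩ := by
    apply e.injective
    rwa [Equiv.symm_apply_apply] at h3
  exact congrArg Subtype.val h4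

lemma aux_modulus {G X : Type*} [Group G] [MetricSpace X] [CompactSpace X] [MulAction G X]
    (hc : ∀ g : G, Continuous fun x : X => g • x) (T : Finset G)
    {θ : ℝ} (hθ : 0 < θ) :
    ∃ ρ : ℝ, 0 < ρ ∧ ρ ≤ θ ∧ ∀ t ∈ T, ∀ a b : X, dist a b ≤ ρ → dist (t • a) (t • b) ≤ θ := by
  classical
  induction T using Finset.induction_on with
  | empty => exact ⟨θ, hθ, le_refl _, by simp⟩
  | @insert g T hgT IH =>
    obtain ⟨ρ, h1, h2, h3⟩ := IH
    obtain ⟨δ, hδpos, hδ⟩ := Metric.uniformContinuous_iff.mp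
      (CompactSpace.uniformContinuous_of_continuous (hc g)) θ hθ
    refine ⟨min ρ (δ / 2), by positivity, le_trans (min_le_left _ _) h2, ?_⟩
    intro t ht a b hab
    rcases Finset.mem_insert.mp ht with rfl | ht'
    · exact le_of_lt (hδ (lt_of_le_of_lt (le_trans hab (min_le_right _ _)) (by linarith)))
    · exact h3 t ht' a b (le_trans hab (min_le_left _ _))
theorem stmt_5 {G X : Type*} [Group G] [Group.FG G] [MetricSpace X] [CompactSpace X]
    [MulAction G X] (hc : ∀ g : G, Continuous fun x : X => g • x)
    (hexp : ∃ ε > (0 : ℝ), ∀ x y : X, x ≠ y → ∃ g : G, ε < dist (g • x) (g • y))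
    (hpp : ∀ x : X, (MulAction.orbit G x).Finite) :
    Finite X := by
  classical
  obtain ⟨ε, hε, hE⟩ := hexp
  by_contra hfin
  rw [not_finite_iff_infinite] at hfin
  -- the kernel subgroups
  set K : ℕ → Subgroup G := fun n => ⨅ φ : G →* Equiv.Perm (Fin n), φ.ker with hKdef
  have hKfi : ∀ n, (K n).FiniteIndex := by
    intro n
    haveI : Finite (G →* Equiv.Perm (Fin n)) := aux_homs_finite
    exact Subgroup.finiteIndex_iInf fun φ => inferInstance
  -- fixed point sets
  set F : ℕ → Set X := fun n => {x : X | ∀ k ∈ K n, k • x = x} with hFdef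
  have hFclosed : ∀ n, IsClosed (F n) := by
    intro n
    have hEq : F n = ⋂ (k : G) (_ : k ∈ K n), {x : X | k • x = x} := by
      ext x; simp [hFdef]
    rw [hEq]
    exact isClosed_iInter fun k => isClosed_iInter fun _ => isClosed_eq (hc k) continuous_id
  have hFcover : ∀ x : X, ∃ n, x ∈ F n := by
    intro x
    obtain ⟨n, hn⟩ := aux_K_fixes x (hpp x)
    exact ⟨n, fun k hk => hn k hk⟩
  -- Lemma B : rigidity near fixed points of K n
  have lemB : ∀ n : ℕ, ∃ δ : ℝ, 0 < δ ∧
      ∀ x y : X, x ∈ F n → (∀ k ∈ K n, dist (k • y) x ≤ δ) → y = x := by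
    intro n
    haveI := hKfi n
    haveI : Finite (G ⧸ K n) := inferInstance
    have hTfin : (Set.range (fun q : G ⧸ K n => Quotient.out q)).Finite := Set.finite_range _
    obtain ⟨δ, hδpos, _, hδ⟩ := aux_modulus hc hTfin.toFinset hε
    refine ⟨δ, hδpos, fun x y hx hy => ?_⟩
    by_contra hne
    obtain ⟨g, hg⟩ := hE y x hne
    set t := Quotient.out (QuotientGroup.mk g : G ⧸ K n) with ht
    have htk : t⁻¹ * g ∈ K n := by
      rw [← QuotientGroup.eq]
      simp [ht]
    have h1 : g • y = t • ((t⁻¹ * g) • y) := by rw [← mul_smul, mul_inv_cancel_left]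
    have h2 : g • x = t • x := by
      conv_lhs => rw [← mul_inv_cancel_left t g, mul_smul, hx _ htk]
    have h3 : dist (g • y) (g • x) ≤ ε := by
      rw [h1, h2]
      exact hδ t (hTfin.mem_toFinset.mpr ⟨_, rfl⟩) _ _ (hy _ htk)
    exact absurd hg (not_lt.mpr h3)
  -- the set of non-isolated points
  set A : Set X := {x : X | ∀ r : ℝ, 0 < r → ∃ y : X, y ≠ x ∧ dist y x < r} with hAdef
  have hAclosed : IsClosed A := by
    rw [← isOpen_compl_iff, Metric.isOpen_iff]
    intro x hx
    simp only [hAdef, mem_compl_iff, mem_setOf_eq, not_forall] at hx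
    obtain ⟨r, hr, hxr⟩ := hx
    push_neg at hxr
    have hball : ∀ z : X, dist z x < r → z = x := by
      intro z hz
      by_contra hzx
      exact absurd hz (not_lt.mpr (hxr z hzx))
    refine ⟨r, hr, fun z hz => ?_⟩
    rw [mem_ball] at hz
    have hzx := hball z hz
    subst hzx
    intro hzA
    obtain ⟨y, hy1, hy2⟩ := hzA r hr
    exact hy1 (hball y hy2)
  have hAne : A.Nonempty := by
    by_contra hAe
    rw [Set.not_nonempty_iff_eq_empty] at hAe
    have hiso : ∀ x : X, ∃ r, 0 < r ∧ ∀ y, dist y x < r → y = x := by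
      intro x
      have hx : x ∉ A := by rw [hAe]; exact notMem_empty x
      simp only [hAdef, mem_setOf_eq, not_forall] at hx
      obtain ⟨r, hr, hxr⟩ := hx
      push_neg at hxr
      refine ⟨r, hr, fun y hy => ?_⟩
      by_contra hyx
      exact absurd hy (not_lt.mpr (hxr y hyx))
    choose rf hrf hrf2 using hiso
    obtain ⟨t, ht⟩ := isCompact_univ.elim_finite_subcover (fun x : X => ball x (rf x))
      (fun x => isOpen_ball) (fun x _ => mem_iUnion.mpr ⟨x, mem_ball_self (hrf x)⟩)
    have huf : (univ : Set X).Finite := by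
      apply Set.Finite.subset (t.finite_toSet.biUnion (fun x _ => finite_singleton x))
      intro z hz
      obtain ⟨x, hxt, hzx⟩ := mem_iUnion₂.mp (ht hz)
      rw [mem_ball] at hzx
      exact mem_biUnion hxt (by simp [hrf2 x z hzx])
    exact absurd (Set.finite_univ_iff.mp huf) (not_finite_iff_infinite.mpr hfin)
  -- Baire category in A
  haveI hAcs : CompleteSpace ↥A := hAclosed.completeSpace_coe
  haveI : Nonempty ↥A := hAne.to_subtype
  obtain ⟨N, hNne⟩ := nonempty_interior_of_iUnion_of_closed
      (f := fun n : ℕ => (Subtype.val ⁻¹' F n : Set ↥A))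
      (fun n => (hFclosed n).preimage continuous_subtype_val)
      (by
        rw [Set.eq_univ_iff_forall]
        intro z
        obtain ⟨n, hn⟩ := hFcover z.1
        exact mem_iUnion.mpr ⟨n, hn⟩)
  obtain ⟨z0, hz0⟩ := hNne
  obtain ⟨r₀, hr₀pos, hr₀⟩ := Metric.isOpen_iff.mp isOpen_interior z0 hz0
  set x₀ : X := z0.1 with hx₀def
  have hx₀A : x₀ ∈ A := z0.2
  have hz0m : z0 ∈ (Subtype.val ⁻¹' F N : Set ↥A) := interior_subset hz0
  have hx₀F : x₀ ∈ F N := hz0m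
  have hloc : ∀ z ∈ A, dist z x₀ < r₀ → z ∈ F N := by
    intro z hz hdist
    have hzb : (⟨z, hz⟩ : ↥A) ∈ ball z0 r₀ := by
      rw [mem_ball, Subtype.dist_eq]
      exact hdist
    have h2 : (⟨z, hz⟩ : ↥A) ∈ (Subtype.val ⁻¹' F N : Set ↥A) := interior_subset (hr₀ hzb)
    exact h2
  obtain ⟨δ, hδpos, hB⟩ := lemB N
  set r : ℝ := min r₀ δ with hrdef
  have hrpos : 0 < r := lt_min hr₀pos hδpos
  have hCL : ∀ z ∈ A, dist z x₀ < r → z = x₀ := by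
    intro z hz hdist
    have hzF : z ∈ F N := hloc z hz (lt_of_lt_of_le hdist (min_le_left _ _))
    exact hB x₀ z hx₀F (fun k hk => by
      rw [hzF k hk]
      exact le_trans (le_of_lt hdist) (min_le_right _ _))
  -- generators of K N
  haveI := hKfi N
  obtain ⟨S, hScl, hSfin⟩ := Group.fg_iff.mp (inferInstance : Group.FG ↥(K N))
  set Sg : Set G := ((fun s : ↥(K N) => (s : G)) '' S) ∪ ((fun s : ↥(K N) => (s : G)⁻¹) '' S)
    with hSgdef
  have hSgfin : Sg.Finite := (hSfin.image _).union (hSfin.image _)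
  have hθpos : 0 < r / 2 := by linarith
  obtain ⟨ρ₁, hρ₁pos, hρ₁le, hmod⟩ := aux_modulus hc hSgfin.toFinset hθpos
  set ρ : ℝ := min ρ₁ δ with hρdef
  have hρpos : 0 < ρ := lt_min hρ₁pos hδpos
  have hmod' : ∀ t ∈ Sg, ∀ a b : X, dist a b ≤ ρ → dist (t • a) (t • b) ≤ r / 2 := by
    intro t ht a b hab
    exact hmod t (hSgfin.mem_toFinset.mpr ht) a b (le_trans hab (min_le_left _ _))
  -- the walk dichotomy
  have hwalk : ∀ y : X, dist y x₀ ≤ ρ → y ≠ x₀ →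
      ∃ w : X, (∃ k ∈ K N, k • y = w) ∧ ρ < dist w x₀ ∧ dist w x₀ ≤ r / 2 := by
    intro y hyρ hyne
    by_cases hall : ∀ k ∈ K N, dist (k • y) x₀ ≤ ρ
    · exact absurd (hB x₀ y hx₀F (fun k hk => le_trans (hall k hk) (min_le_right _ _))) hyne
    push_neg at hall
    obtain ⟨k₀, hk₀K, hk₀⟩ := hall
    have key : ∀ k : ↥(K N), dist ((k : G) • y) x₀ ≤ ρ ∨
        ∃ w : X, (∃ k' ∈ K N, k' • y = w) ∧ ρ < dist w x₀ ∧ dist w x₀ ≤ r / 2 := by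
      intro k
      have hk : k ∈ Subgroup.closure S := by
        rw [hScl]; exact Subgroup.mem_top k
      induction hk using Subgroup.closure_induction_left with
      | one =>
        left
        rwa [OneMemClass.coe_one, one_smul]
      | mul_left s hs k' hk' ih =>
        rcases ih with ih | ih
        · have hfix : (s : G) • x₀ = x₀ := hx₀F (s : G) s.2
          have hcoe : ((s * k' : ↥(K N)) : G) • y = (s : G) • ((k' : G) • y) := by
            rw [Subgroup.coe_mul, mul_smul]
          have hstep : dist (((s * k' : ↥(K N)) : G) • y) x₀ ≤ r / 2 := by
            rw [hcoe]
            calc dist ((s : G) • ((k' : G) • y)) x₀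
                = dist ((s : G) • ((k' : G) • y)) ((s : G) • x₀) := by rw [hfix]
              _ ≤ r / 2 := hmod' (s : G) (Or.inl ⟨s, hs, rfl⟩) _ _ ih
          by_cases hs2 : dist (((s * k' : ↥(K N)) : G) • y) x₀ ≤ ρ
          · left; exact hs2
          · right
            exact ⟨_, ⟨((s * k' : ↥(K N)) : G), (s * k').2, rfl⟩, lt_of_not_ge hs2, hstep⟩
        · right; exact ih
      | inv_mul_cancel s hs k' hk' ih =>
        rcases ih with ih | ih
        · have hfix : ((s : G))⁻¹ • x₀ = x₀ := hx₀F ((s : G))⁻¹ (s⁻¹ : ↥(K N)).2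
          have hcoe : ((s⁻¹ * k' : ↥(K N)) : G) • y = ((s : G))⁻¹ • ((k' : G) • y) := by
            rw [Subgroup.coe_mul, mul_smul, Subgroup.coe_inv]
          have hstep : dist (((s⁻¹ * k' : ↥(K N)) : G) • y) x₀ ≤ r / 2 := by
            rw [hcoe]
            calc dist (((s : G))⁻¹ • ((k' : G) • y)) x₀
                = dist (((s : G))⁻¹ • ((k' : G) • y)) (((s : G))⁻¹ • x₀) := by rw [hfix]
              _ ≤ r / 2 := hmod' ((s : G))⁻¹ (Or.inr ⟨s, hs, rfl⟩) _ _ ih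
          by_cases hs2 : dist (((s⁻¹ * k' : ↥(K N)) : G) • y) x₀ ≤ ρ
          · left; exact hs2
          · right
            exact ⟨_, ⟨((s⁻¹ * k' : ↥(K N)) : G), (s⁻¹ * k').2, rfl⟩, lt_of_not_ge hs2, hstep⟩
        · right; exact ih
    rcases key ⟨k₀, hk₀K⟩ with h | h
    · exact absurd h (not_le.mpr hk₀)
    · exact h
  -- the punctured ball is infinite
  set Y : Set X := {y : X | y ≠ x₀ ∧ dist y x₀ ≤ ρ} with hYdef
  have hYinf : Y.Infinite := by
    by_contra h
    rw [Set.not_infinite] at h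
    rcases eq_empty_or_nonempty Y with hYe | hYne
    · obtain ⟨y, hy1, hy2⟩ := hx₀A ρ hρpos
      have : y ∈ Y := ⟨hy1, le_of_lt hy2⟩
      rw [hYe] at this
      exact notMem_empty y this
    · obtain ⟨ym, hymY, hmin⟩ := Set.exists_min_image Y (fun y => dist y x₀) h hYne
      have hympos : 0 < dist ym x₀ := dist_pos.mpr hymY.1
      obtain ⟨y, hy1, hy2⟩ := hx₀A (min (dist ym x₀) ρ) (lt_min hympos hρpos)
      have hyY : y ∈ Y := ⟨hy1, le_of_lt (lt_of_lt_of_le hy2 (min_le_right _ _))⟩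
      exact absurd (hmin y hyY) (not_le.mpr (lt_of_lt_of_le hy2 (min_le_left _ _)))
  -- the image shell
  set W : Set X := {w : X | (∃ k ∈ K N, ∃ y ∈ Y, k • y = w) ∧ ρ < dist w x₀ ∧ dist w x₀ ≤ r / 2}
    with hWdef
  have hYW : ∀ y ∈ Y, ∃ w ∈ W, ∃ k ∈ K N, k • y = w := by
    intro y hy
    obtain ⟨w, ⟨k, hk, hkw⟩, h1, h2⟩ := hwalk y hy.2 hy.1
    exact ⟨w, ⟨⟨k, hk, y, hy, hkw⟩, h1, h2⟩, k, hk, hkw⟩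
  rcases Set.finite_or_infinite W with hWfin | hWinf
  · -- W finite : Y is contained in finitely many finite orbits
    have hsub : Y ⊆ ⋃ w ∈ W, {y : X | ∃ k ∈ K N, k • y = w} := by
      intro y hy
      obtain ⟨w, hwW, k, hk, hkw⟩ := hYW y hy
      exact mem_biUnion hwW ⟨k, hk, hkw⟩
    have hfinU : (⋃ w ∈ W, {y : X | ∃ k ∈ K N, k • y = w}).Finite := by
      apply hWfin.biUnion
      intro w _
      apply (hpp w).subset
      rintro y ⟨k, hk, hkw⟩
      exact MulAction.mem_orbit_iff.mpr ⟨k⁻¹, by rw [← hkw, inv_smul_smul]⟩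
    exact hYinf (hfinU.subset hsub)
  · -- W infinite : extract accumulation point, contradiction
    set eW := Set.Infinite.natEmbedding W hWinf with heW
    set u : ℕ → X := fun i => (eW i : X) with hu
    have huW : ∀ i, u i ∈ W := fun i => (eW i).2
    have huinj : Function.Injective u := fun i j h => eW.injective (Subtype.ext h)
    obtain ⟨w, -, ψ, hψmono, hψtend⟩ := isCompact_univ.tendsto_subseq (fun i => mem_univ (u i))
    have htd : Filter.Tendsto (fun i => dist (u (ψ i)) x₀) Filter.atTop (nhds (dist w x₀)) :=
      hψtend.dist tendsto_const_nhds
    have hwρ : ρ ≤ dist w x₀ :=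
      ge_of_tendsto htd (Filter.Eventually.of_forall fun i => le_of_lt (huW (ψ i)).2.1)
    have hwθ : dist w x₀ ≤ r / 2 :=
      le_of_tendsto htd (Filter.Eventually.of_forall fun i => (huW (ψ i)).2.2)
    have hwA : w ∈ A := by
      intro s hs
      have hev : ∀ᶠ i in Filter.atTop, (u ∘ ψ) i ∈ ball w s := hψtend (ball_mem_nhds w hs)
      rw [Filter.eventually_atTop] at hev
      obtain ⟨i₀, hi₀⟩ := hev
      have hneq : u (ψ i₀) ≠ u (ψ (i₀ + 1)) := by
        intro h
        have := hψmono.injective (huinj h)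
        omega
      by_cases hw1 : u (ψ i₀) = w
      · refine ⟨u (ψ (i₀ + 1)), fun hcon => hneq (by rw [hw1, hcon]), ?_⟩
        have := hi₀ (i₀ + 1) (by omega)
        rwa [Function.comp_apply, mem_ball] at this
      · refine ⟨u (ψ i₀), hw1, ?_⟩
        have := hi₀ i₀ le_rfl
        rwa [Function.comp_apply, mem_ball] at this
    have hwx₀ : w = x₀ := hCL w hwA (lt_of_le_of_lt hwθ (by linarith))
    rw [hwx₀, dist_self] at hwρ
    linarith
end

section
/- Let φ : X → X be a homeomorphism of a compact metric space. If there is ε > 0 such that for all distinct x, y ∈ X there exists n ≥ 0 with d(φⁿ(x), φⁿ(y)) > ε (i.e., φ is forward/positively expansive), then X is finite. -/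
theorem stmt_9 {X : Type*} [MetricSpace X] [CompactSpace X] (φ : X ≃ₜ X)
    (ε : ℝ) (hε : 0 < ε)
    (hexp : ∀ x y : X, x ≠ y →
      ∃ n : ℕ, ε < dist ((φ : X → X)^[n] x) ((φ : X → X)^[n] y)) :
    Finite X := by
  classical
  by_contra hfin
  rw [not_finite_iff_infinite] at hfin
  set f : X → X := (φ : X → X) with hf
  set g : X → X := (φ.symm : X → X) with hg
  have hDfg : ∀ x, f (g x) = x := fun x => φ.apply_symm_apply x
  have hDgf : ∀ x, g (f x) = x := fun x => φ.symm_apply_apply x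
  have hfg : ∀ (k : ℕ) (x : X), f^[k] (g^[k] x) = x := by
    intro k
    induction k with
    | zero => intro x; simp
    | succ k ih =>
      intro x
      rw [Function.iterate_succ_apply g, Function.iterate_succ_apply' f, ih, hDfg]
  have hgf : ∀ (k : ℕ) (x : X), g^[k] (f^[k] x) = x := by
    intro k
    induction k with
    | zero => intro x; simp
    | succ k ih =>
      intro x
      rw [Function.iterate_succ_apply f, Function.iterate_succ_apply' g, ih, hDgf]
  -- uniform expansiveness (Lemma U)
  have hU : ∀ γ : ℝ, 0 < γ → ∃ M : ℕ, ∀ x y : X,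
      (∀ n ≤ M, dist (f^[n] x) (f^[n] y) ≤ ε) → dist x y < γ := by
    intro γ hγ
    by_contra hcon
    push_neg at hcon
    set C : ℕ → Set (X × X) := fun m =>
      {p : X × X | (∀ n ≤ m, dist (f^[n] p.1) (f^[n] p.2) ≤ ε) ∧ γ ≤ dist p.1 p.2} with hC
    have hclosed : ∀ m, IsClosed (C m) := by
      intro m
      have h1 : IsClosed {p : X × X | ∀ n ≤ m, dist (f^[n] p.1) (f^[n] p.2) ≤ ε} := by
        have : {p : X × X | ∀ n ≤ m, dist (f^[n] p.1) (f^[n] p.2) ≤ ε}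
            = ⋂ (n : ℕ) (_ : n ≤ m), {p : X × X | dist (f^[n] p.1) (f^[n] p.2) ≤ ε} := by
          ext p; simp
        rw [this]
        refine isClosed_iInter fun n => isClosed_iInter fun _ => ?_
        exact isClosed_le (Continuous.dist
          ((φ.continuous.iterate n).comp continuous_fst)
          ((φ.continuous.iterate n).comp continuous_snd)) continuous_const
      have h2 : IsClosed {p : X × X | γ ≤ dist p.1 p.2} :=
        isClosed_le continuous_const (Continuous.dist continuous_fst continuous_snd)
      exact h1.inter h2
    have hne : ∀ m, (C m).Nonempty := by
      intro m
      obtain ⟨x, y, h1, h2⟩ := hcon m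
      exact ⟨(x, y), h1, h2⟩
    have hsub : ∀ m, C (m + 1) ⊆ C m := by
      intro m p hp
      exact ⟨fun n hn => hp.1 n (hn.trans (Nat.le_succ m)), hp.2⟩
    have hint := IsCompact.nonempty_iInter_of_sequence_nonempty_isCompact_isClosed
      C hsub hne ((hclosed 0).isCompact) hclosed
    obtain ⟨p, hp⟩ := hint
    have hpall : ∀ m, p ∈ C m := by
      intro m; exact Set.mem_iInter.mp hp m
    have hpne : p.1 ≠ p.2 := by
      intro h
      have := (hpall 0).2
      rw [h, dist_self] at this
      linarith
    obtain ⟨n, hn⟩ := hexp p.1 p.2 hpne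
    have := (hpall n).1 n le_rfl
    linarith
  -- uniform continuity of g at scale ε : get r
  obtain ⟨r, hr0, hr⟩ : ∃ r > 0, ∀ a b : X, dist a b < r → dist (g a) (g b) ≤ ε := by
    obtain ⟨δ, hδ0, hδ⟩ := Metric.uniformContinuous_iff.mp
      (CompactSpace.uniformContinuous_of_continuous φ.symm.continuous) ε hε
    exact ⟨δ, hδ0, fun a b h => (hδ h).le⟩
  obtain ⟨M, hM⟩ := hU r hr0
  -- uniform continuity of the first M iterates : get ρ
  have hρex : ∀ m : ℕ, ∃ ρ > (0:ℝ), ∀ x y : X, dist x y ≤ ρ →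
      ∀ n ≤ m, dist (f^[n] x) (f^[n] y) ≤ ε := by
    intro m
    induction m with
    | zero =>
      refine ⟨ε, hε, fun x y h n hn => ?_⟩
      interval_cases n
      simpa using h
    | succ m ih =>
      obtain ⟨ρ, hρ0, hρ⟩ := ih
      obtain ⟨δ, hδ0, hδ⟩ := Metric.uniformContinuous_iff.mp
        (CompactSpace.uniformContinuous_of_continuous (φ.continuous.iterate (m+1))) ε hε
      refine ⟨min ρ (δ/2), lt_min hρ0 (by linarith), fun x y h n hn => ?_⟩
      rcases Nat.lt_succ_iff_lt_or_eq.mp (Nat.lt_succ_of_le hn) with h' | h'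
      · exact hρ x y (h.trans (min_le_left _ _)) n (Nat.lt_succ_iff.mp h')
      · subst h'
        exact (hδ (lt_of_le_of_lt (h.trans (min_le_right _ _)) (by linarith))).le
  obtain ⟨ρ, hρ0, hρ⟩ := hρex M
  -- key claim : D_{M+j}(f^k x) pulls back into D_{M+j+k}(x)
  have hclaim : ∀ (k j : ℕ) (z x : X),
      (∀ n ≤ M + j, dist (f^[n] z) (f^[n] (f^[k] x)) ≤ ε) →
      (∀ n ≤ M + j + k, dist (f^[n] (g^[k] z)) (f^[n] x) ≤ ε) := by
    intro k
    induction k with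
    | zero =>
      intro j z x h n hn
      simpa using h n (by simpa using hn)
    | succ k ih =>
      intro j z x h
      have h0 : dist z (f^[k+1] x) < r :=
        hM z (f^[k+1] x) (fun n hn => h n (hn.trans (Nat.le_add_right _ _)))
      have h1 : dist (g z) (f^[k] x) ≤ ε := by
        have := hr z (f^[k+1] x) h0
        rwa [Function.iterate_succ_apply' f, hDgf] at this
      have h2 : ∀ n ≤ M + (j + 1), dist (f^[n] (g z)) (f^[n] (f^[k] x)) ≤ ε := by
        intro n hn
        match n with
        | 0 => simpa using h1
        | (m+1) =>
          have e1 : f^[m+1] (g z) = f^[m] z := by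
            rw [Function.iterate_succ_apply f, hDfg]
          have e2 : f^[m+1] (f^[k] x) = f^[m] (f^[k+1] x) := by
            rw [Function.iterate_succ_apply f, ← Function.iterate_succ_apply' f]
          rw [e1, e2]
          exact h m (by omega)
      have h3 := ih (j + 1) (g z) x h2
      intro n hn
      have := h3 n (by omega)
      rwa [← Function.iterate_succ_apply g] at this
  -- cover X by finitely many ρ-balls
  have hcov0 : (Set.univ : Set X) ⊆ ⋃ x : X, Metric.ball x ρ := by
    intro x _
    exact Set.mem_iUnion.mpr ⟨x, Metric.mem_ball_self hρ0⟩
  obtain ⟨t, ht⟩ := isCompact_univ.elim_finite_subcover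
    (fun x : X => Metric.ball x ρ) (fun x => Metric.isOpen_ball) hcov0
  -- t is nonempty
  have htne : t.Nonempty := by
    have : (Classical.arbitrary X) ∈ ⋃ x ∈ t, Metric.ball x ρ := ht (Set.mem_univ _)
    obtain ⟨y, hy, -⟩ := Set.mem_iUnion₂.mp this
    exact ⟨y, hy⟩
  -- pick t.card + 1 points
  obtain ⟨s, hscard⟩ := Infinite.exists_subset_card_eq X (t.card + 1)
  have hsod : s.offDiag.Nonempty := by
    have h2 : 2 ≤ s.card := by
      rw [hscard]
      have := Finset.Nonempty.card_pos htne
      omega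
    obtain ⟨a, ha, b, hb, hab⟩ := Finset.one_lt_card.mp h2
    exact ⟨(a, b), Finset.mem_offDiag.mpr ⟨ha, hb, hab⟩⟩
  -- minimum pairwise distance in s
  set ds : Finset ℝ := s.offDiag.image (fun p => dist p.1 p.2) with hds
  have hdsne : ds.Nonempty := hsod.image _
  set d₀ : ℝ := ds.min' hdsne with hd₀
  have hd₀pos : 0 < d₀ := by
    have hmem : d₀ ∈ ds := ds.min'_mem hdsne
    rw [hds] at hmem
    obtain ⟨p, hp, hpd⟩ := Finset.mem_image.mp hmem
    have := (Finset.mem_offDiag.mp hp).2.2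
    rw [← hpd]
    exact dist_pos.mpr this
  have hd₀le : ∀ u ∈ s, ∀ v ∈ s, u ≠ v → d₀ ≤ dist u v := by
    intro u hu v hv huv
    have hmem : dist u v ∈ ds := by
      rw [hds]
      exact Finset.mem_image.mpr ⟨(u, v), Finset.mem_offDiag.mpr ⟨hu, hv, huv⟩, rfl⟩
    exact Finset.min'_le _ _ hmem
  -- choose K from Lemma U at scale d₀ / 2
  obtain ⟨K, hK⟩ := hU (d₀ / 2) (by linarith)
  -- assign to each point of s a ball center for its K-th iterate
  have hcenter : ∀ u : X, ∃ y, y ∈ t ∧ dist (f^[K] u) y < ρ := by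
    intro u
    have : f^[K] u ∈ ⋃ y ∈ t, Metric.ball y ρ := ht (Set.mem_univ _)
    obtain ⟨y, hy, hby⟩ := Set.mem_iUnion₂.mp this
    exact ⟨y, hy, hby⟩
  set F : X → X := fun u => (hcenter u).choose with hF
  have hFmem : ∀ u, F u ∈ t := fun u => (hcenter u).choose_spec.1
  have hFdist : ∀ u, dist (f^[K] u) (F u) < ρ := fun u => (hcenter u).choose_spec.2
  -- pigeonhole
  obtain ⟨u, hu, v, hv, huv, hFeq⟩ :=
    Finset.exists_ne_map_eq_of_card_lt_of_maps_to
      (by rw [hscard]; omega) (fun a _ => hFmem a)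
  -- both u and v are (M+K)-shadowed by g^[K] (F u)
  have hshadow : ∀ w : X, dist (f^[K] w) (F u) < ρ →
      dist w (g^[K] (F u)) < d₀ / 2 := by
    intro w hw
    have hhyp : ∀ n ≤ M + 0, dist (f^[n] (f^[K] w)) (f^[n] (f^[K] (g^[K] (F u)))) ≤ ε := by
      intro n hn
      rw [hfg K (F u)]
      exact hρ (f^[K] w) (F u) hw.le n (by omega)
    have := hclaim K 0 (f^[K] w) (g^[K] (F u)) hhyp
    rw [hgf K w] at this
    refine hK w (g^[K] (F u)) (fun n hn => this n (by omega))
  have hud : dist u (g^[K] (F u)) < d₀ / 2 := hshadow u (hFdist u)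
  have hvd : dist v (g^[K] (F u)) < d₀ / 2 := by
    refine hshadow v ?_
    rw [hFeq]; exact hFdist v
  have : dist u v < d₀ := by
    calc dist u v ≤ dist u (g^[K] (F u)) + dist (g^[K] (F u)) v := dist_triangle _ _ _
    _ < d₀ / 2 + d₀ / 2 := by rw [dist_comm (g^[K] (F u)) v]; exact add_lt_add hud hvd
    _ = d₀ := by ring
  exact absurd (hd₀le u hu v hv huv) (by linarith)
end

section
/- Let M be a finitely generated semigroup acting on the right on a compact metric space X by continuous maps, expansively. If every point of X has a finite inverse orbit (the inverse orbit of x is {y ∈ X : x ∈ y·M}), then X is finite. -/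
/-!
Through the generating set, M acts by words over the finite alphabet S, so it suffices to treat
an expansive action of a free monoid on finitely many letters. If X were infinite it would have
a non-isolated point a. For y ≠ a take a shortest word w_y pushing a and y more than ε apart;
by continuity of the finitely many short words, |w_y| → ∞ as y → a. Deleting the last k letters
of w_y and passing to limits along an ultrafilter converging to a yields, for every k, a pair
x ≠ y that stays ε-close along all words shorter than k and is mapped by one word onto a fixed
ε-separated pair (u, v). Such pairs all lie in the finite set (inverse orbit of u) × (inverse
orbit of v), on which the separation lengths are bounded; k beyond that bound is a
contradiction.
-/

open scoped Pointwise

/-- `spow S n` is the set `Sⁿ` of products of `n` elements of `S` (empty for `n = 0`). -/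
def spow {M : Type*} [Mul M] (S : Set M) : ℕ → Set M
  | 0 => ∅
  | 1 => S
  | n + 2 => spow S (n + 1) * S

open Filter Topology

theorem Ultrafilter.exists_eventually_eq_of_finite {ι β : Type*} (𝒰 : Ultrafilter ι)
    {g : ι → β} {s : Set β} (hs : s.Finite) (hg : ∀ i, g i ∈ s) : ∃ b, ∀ᶠ i in 𝒰, g i = b := by
  obtain ⟨b, -, hb⟩ := eq_pure_of_finite_mem hs (mem_map.2 (univ_mem' hg))
  exact ⟨b, mem_map.1 (hb ▸ mem_pure.2 rfl : {b} ∈ 𝒰.map g)⟩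

namespace WordAction

variable {α X : Type*} [MetricSpace X] (f : X → α → X) (ε : ℝ)

def Separates (w : List α) (x y : X) : Prop :=
  ε < dist (w.foldl f x) (w.foldl f y)

def CloseUpTo (k : ℕ) (x y : X) : Prop :=
  ∀ w : List α, w.length < k → dist (w.foldl f x) (w.foldl f y) ≤ ε

variable {f ε}

theorem continuous_foldl (hf : ∀ a, Continuous (f · a)) (w : List α) :
    Continuous fun x => w.foldl f x := by
  induction w with
  | nil => exact continuous_id
  | cons a w ih => exact ih.comp (hf a)

theorem eventually_closeUpTo [Finite α] (hf : ∀ a, Continuous (f · a)) (hε : 0 < ε)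
    (k : ℕ) (x : X) : ∀ᶠ y in 𝓝 x, CloseUpTo f ε k x y := by
  have hw : ∀ w : List α, ∀ᶠ y in 𝓝 x, dist (w.foldl f x) (w.foldl f y) ≤ ε := fun w =>
    ((continuous_foldl hf w).continuousAt.eventually (Metric.closedBall_mem_nhds _ hε)).mono
      fun y hy => by rwa [dist_comm]
  filter_upwards [(List.finite_length_lt α k).eventually_all.2 fun w _ => hw w] with y hy w hwk
  exact hy w hwk

theorem foldl_eq_of_tendsto (hf : ∀ a, Continuous (f · a)) {ι : Type*} {l : Filter ι} [l.NeBot]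
    {p : ι → X} {pre : ι → List α} {s : List α} {x y : X}
    (hx : Tendsto (fun i => (pre i).foldl f (p i)) l (𝓝 x))
    (hy : Tendsto (fun i => (pre i ++ s).foldl f (p i)) l (𝓝 y)) : s.foldl f x = y := by
  simp only [List.foldl_append] at hy
  exact tendsto_nhds_unique (((continuous_foldl hf s).tendsto x).comp hx) hy

theorem exists_bound_separating_length {P : Set (X × X)} (hP : P.Finite)
    (hexp : ∀ x y : X, x ≠ y → ∃ w : List α, Separates f ε w x y) :
    ∃ n : ℕ, ∀ pq ∈ P, pq.1 ≠ pq.2 → ∃ w : List α, w.length < n ∧ Separates f ε w pq.1 pq.2 := by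
  refine (hP.eventually_all.2 fun pq _ => ?_).exists (f := atTop)
  by_cases hpq : pq.1 = pq.2
  · exact Eventually.of_forall fun _ h => absurd hpq h
  · obtain ⟨w, hw⟩ := hexp _ _ hpq
    exact (eventually_gt_atTop w.length).mono fun n hn _ => ⟨w, hn, hw⟩

theorem exists_limit_pair [Finite α] [CompactSpace X] (hf : ∀ a, Continuous (f · a))
    {ι : Type*} (𝒰 : Ultrafilter ι) {p q : ι → X} {w : ι → List α}
    (hsep : ∀ᶠ i in 𝒰, Separates f ε (w i) (p i) (q i))
    (hclose : ∀ᶠ i in 𝒰, CloseUpTo f ε (w i).length (p i) (q i))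
    (hlen : Tendsto (fun i => (w i).length) 𝒰 atTop) :
    ∃ u v : X, ε ≤ dist u v ∧ ∀ k : ℕ, ∃ x y : X, ∃ s : List α,
      s.foldl f x = u ∧ s.foldl f y = v ∧ CloseUpTo f ε k x y := by
  have lim (g : ι → X) : Tendsto g 𝒰 (𝓝 (𝒰.map g).lim) := (𝒰.map g).le_nhds_lim
  refine ⟨_, _, ge_of_tendsto ((lim _).dist (lim _)) (hsep.mono fun i h => h.le), fun k => ?_⟩
  obtain ⟨s, hs⟩ := 𝒰.exists_eventually_eq_of_finite (List.finite_length_le α k)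
    fun i => show ((w i).drop ((w i).length - k)).length ≤ k by simp; omega
  set pre := fun i => (w i).take ((w i).length - k)
  have hw : ∀ᶠ i in 𝒰, pre i ++ s = w i := hs.mono fun i h => h ▸ List.take_append_drop _ _
  refine ⟨_, _, s, foldl_eq_of_tendsto hf (lim fun i => (pre i).foldl f (p i)) ?_,
    foldl_eq_of_tendsto hf (lim fun i => (pre i).foldl f (q i)) ?_, fun v hv => ?_⟩
  · exact (lim _).congr' (hw.mono fun i h => by rw [← h])
  · exact (lim _).congr' (hw.mono fun i h => by rw [← h])
  · refine le_of_tendsto ((((continuous_foldl hf v).tendsto _).comp (lim _)).dist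
      (((continuous_foldl hf v).tendsto _).comp (lim _))) ?_
    filter_upwards [hclose, hlen.eventually_ge_atTop k] with i hi hk
    simpa only [Function.comp, ← List.foldl_append] using
      hi (pre i ++ v) (by simp [pre]; omega)

theorem finite_of_expansive_of_finite_preimages [Finite α] [CompactSpace X]
    (hf : ∀ a, Continuous (f · a)) (hε : 0 < ε)
    (hexp : ∀ x y : X, x ≠ y → ∃ w : List α, Separates f ε w x y)
    (hpre : ∀ x : X, {y : X | ∃ w : List α, w.foldl f y = x}.Finite) : Finite X := by
  by_contra hX
  obtain ⟨a, ha⟩ : ∃ a : X, (𝓝[≠] a).NeBot := by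
    by_contra! h
    have : DiscreteTopology X := discreteTopology_iff_nhds_ne.2 h
    exact hX finite_of_compact_of_discrete
  let 𝒰 := Ultrafilter.of (𝓝[≠] a)
  have hne : ∀ᶠ y in 𝒰, y ≠ a := Ultrafilter.of_le _ self_mem_nhdsWithin
  have hnear (k : ℕ) : ∀ᶠ y in 𝒰, CloseUpTo f ε k a y :=
    Ultrafilter.of_le _ (nhdsWithin_le_nhds (eventually_closeUpTo hf hε k a))
  have hmin (y : X) :
      ∃ w : List α, y ≠ a → Separates f ε w a y ∧ CloseUpTo f ε w.length a y := by
    by_cases hy : y = a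
    · exact ⟨[], fun h => absurd hy h⟩
    obtain ⟨w, hw, hmin⟩ := (measure List.length).wf.has_min {w | Separates f ε w a y}
      (hexp a y (Ne.symm hy))
    exact ⟨w, fun _ => ⟨hw, fun v hv => not_lt.1 fun h => hmin v h hv⟩⟩
  choose w hw using hmin
  have hlen : Tendsto (fun y => (w y).length) 𝒰 atTop := tendsto_atTop.2 fun k =>
    (hne.and (hnear (k + 1))).mono fun y ⟨hy, hclose⟩ =>
      not_lt.1 fun hlt => not_lt.2 (hclose (w y) (by omega)) (hw y hy).1
  obtain ⟨u, v, huv, hback⟩ := exists_limit_pair hf 𝒰 (p := fun _ => a) (q := id)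
    (hne.mono fun y hy => (hw y hy).1) (hne.mono fun y hy => (hw y hy).2) hlen
  obtain ⟨n, hn⟩ := exists_bound_separating_length ((hpre u).prod (hpre v)) hexp
  obtain ⟨x, y, s, hx, hy, hclose⟩ := hback n
  have hxy : x ≠ y := fun hxy => (dist_pos.1 (hε.trans_le huv)) (by rw [← hx, ← hy, hxy])
  obtain ⟨t, ht, hsep⟩ := hn (x, y) ⟨⟨s, hx⟩, ⟨s, hy⟩⟩ hxy
  exact not_lt.2 (hclose t ht) hsep

end WordAction

open WordAction

section Semigroup

variable {M X : Type*} [Semigroup M] (act : X → M → X)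

theorem foldl_act_eq_act_foldl_mul (hact : ∀ (x : X) (m n : M), act (act x m) n = act x (m * n))
    {S : Set M} (w : List S) (m : M) (x : X) :
    w.foldl (fun x (s : S) => act x s) (act x m) =
      act x (w.foldl (fun m (s : S) => m * s) m) := by
  induction w generalizing m with
  | nil => rfl
  | cons s w ih => simpa only [List.foldl_cons, hact] using ih (m * s)

theorem exists_word_of_mem_spow (hact : ∀ (x : X) (m n : M), act (act x m) n = act x (m * n))
    {S : Set M} :
    ∀ {n : ℕ} {m : M}, m ∈ spow S n →
      ∃ w : List S, ∀ x, act x m = w.foldl (fun x (s : S) => act x s) x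
  | 1, m, hm => ⟨[⟨m, hm⟩], fun _ => rfl⟩
  | _ + 2, _, ⟨a, ha, b, hb, rfl⟩ => by
    obtain ⟨w, hw⟩ := exists_word_of_mem_spow hact ha
    refine ⟨w ++ [⟨b, hb⟩], fun x => ?_⟩
    rw [List.foldl_append, ← hw, List.foldl_cons, List.foldl_nil, hact]

end Semigroup

theorem stmt_10 {M X : Type*} [Semigroup M] [MetricSpace X] [CompactSpace X]
    (act : X → M → X) (hact : ∀ (x : X) (m n : M), act (act x m) n = act x (m * n))
    (hc : ∀ m : M, Continuous fun x : X => act x m)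
    (S : Finset M) (hgen : ∀ m : M, ∃ n : ℕ, m ∈ spow (S : Set M) n)
    (hexp : ∃ ε > (0 : ℝ), ∀ x y : X, x ≠ y → ∃ m : M, ε < dist (act x m) (act y m))
    (hinv : ∀ x : X, {y : X | ∃ m : M, act y m = x}.Finite) :
    Finite X := by
  obtain ⟨ε, hε, hexp⟩ := hexp
  refine finite_of_expansive_of_finite_preimages (f := fun x (s : (S : Set M)) => act x s)
    (fun s => hc s) hε (fun x y hxy => ?_) (fun x => ((hinv x).insert x).subset ?_)
  · obtain ⟨m, hm⟩ := hexp x y hxy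
    obtain ⟨n, hn⟩ := hgen m
    obtain ⟨w, hw⟩ := exists_word_of_mem_spow act hact hn
    exact ⟨w, by simpa only [Separates, ← hw] using hm⟩
  · rintro y ⟨_ | ⟨s, w⟩, rfl⟩
    · exact Set.mem_insert _ _
    · exact Set.mem_insert_of_mem _ ⟨_, (foldl_act_eq_act_foldl_mul act hact w s y).symm⟩
end

section
/- Let G be a group acting faithfully and equicontinuously on a compact metric space X, and let M be a semigroup acting expansively on the right on X, with the two actions commuting (g·(x·m) = (g·x)·m for all g, m, x). Then G is finite. -/
theorem stmt_12 {G M X : Type*} [Group G] [Semigroup M] [MetricSpace X] [CompactSpace X]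
    [MulAction G X] (hcG : ∀ g : G, Continuous fun x : X => g • x)
    (act : X → M → X) (hact : ∀ (x : X) (m n : M), act (act x m) n = act x (m * n))
    (hcM : ∀ m : M, Continuous fun x : X => act x m)
    (hcomm : ∀ (g : G) (x : X) (m : M), g • act x m = act (g • x) m)
    (hfaith : ∀ g : G, (∀ x : X, g • x = x) → g = 1)
    (hequi : ∀ ε > (0 : ℝ), ∃ δ > (0 : ℝ), ∀ x y : X, dist x y < δ →
      ∀ g : G, dist (g • x) (g • y) < ε)
    (hexp : ∃ ε > (0 : ℝ), ∀ x y : X, x ≠ y → ∃ m : M, ε < dist (act x m) (act y m)) :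
    Finite G := by
  obtain ⟨ε, hε, hsep⟩ := hexp
  obtain ⟨δ, hδ, hδeq⟩ := hequi ε hε
  obtain ⟨δ', hδ', hδ'eq⟩ := hequi δ hδ
  -- Step 1: every nontrivial element moves some point by at least δ
  have key1 : ∀ k : G, k ≠ 1 → ∃ y : X, δ ≤ dist y (k • y) := by
    intro k hk
    have hx0 : ∃ x0 : X, k • x0 ≠ x0 := by
      by_contra h
      push_neg at h
      exact hk (hfaith k h)
    obtain ⟨x0, hx0⟩ := hx0
    obtain ⟨m, hm⟩ := hsep x0 (k • x0) (fun h => hx0 h.symm)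
    refine ⟨act x0 m, ?_⟩
    have hky : k • act x0 m = act (k • x0) m := hcomm k x0 m
    by_contra h
    push_neg at h
    have := hδeq (act x0 m) (k • act x0 m) h 1
    simp only [one_smul] at this
    rw [hky] at this
    exact absurd hm (not_lt.2 this.le)
  -- Step 2: distinct elements differ by at least δ' at some point
  have key2 : ∀ g h : G, g ≠ h → ∃ x : X, δ' ≤ dist (g • x) (h • x) := by
    intro g h hgh
    have hk : g⁻¹ * h ≠ 1 := by
      intro hc
      exact hgh (inv_mul_eq_one.mp hc)
    obtain ⟨y, hy⟩ := key1 _ hk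
    refine ⟨y, ?_⟩
    by_contra hlt
    push_neg at hlt
    have := hδ'eq (g • y) (h • y) hlt g⁻¹
    rw [inv_smul_smul, ← mul_smul] at this
    exact absurd hy (not_le.2 this)
  -- Step 3: choose a finite net adapted to level δ'/3
  obtain ⟨δ₂, hδ₂, hδ₂eq⟩ := hequi (δ' / 3) (by linarith)
  obtain ⟨s, -, hsfin, hscov⟩ :=
    finite_cover_balls_of_compact ((isCompact_univ : IsCompact (Set.univ : Set X))) hδ₂
  haveI : Finite s := hsfin.to_subtype
  haveI : Fintype s := Fintype.ofFinite s
  -- Φ : G → (s → X)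
  set Φ : G → (s → X) := fun g i => g • (i : X) with hΦ
  have hsepΦ : ∀ g h : G, g ≠ h → δ' / 3 ≤ dist (Φ g) (Φ h) := by
    intro g h hgh
    obtain ⟨x, hx⟩ := key2 g h hgh
    have hxcov := hscov (Set.mem_univ x)
    simp only [Set.mem_iUnion, Metric.mem_ball] at hxcov
    obtain ⟨p, hp, hpx⟩ := hxcov
    have hdx : dist x p < δ₂ := hpx
    have h1 : dist (g • x) (g • p) < δ' / 3 := hδ₂eq x p hdx g
    have h2 : dist (h • x) (h • p) < δ' / 3 := hδ₂eq x p hdx h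
    have h3 : δ' / 3 ≤ dist (g • p) (h • p) := by
      have := dist_triangle4 (g • x) (g • p) (h • p) (h • x)
      have hsymm : dist (h • p) (h • x) = dist (h • x) (h • p) := dist_comm _ _
      linarith
    calc δ' / 3 ≤ dist (Φ g ⟨p, hp⟩) (Φ h ⟨p, hp⟩) := h3
      _ ≤ dist (Φ g) (Φ h) := dist_le_pi_dist _ _ _
  -- Step 4: pigeonhole with a finite cover of (s → X)
  obtain ⟨u, -, hufin, hucov⟩ :=
    finite_cover_balls_of_compact ((isCompact_univ : IsCompact (Set.univ : Set (s → X)))) (show (0:ℝ) < δ'/6 by linarith)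
  haveI : Finite u := hufin.to_subtype
  have hmem : ∀ g : G, ∃ c : u, Φ g ∈ Metric.ball (c : s → X) (δ' / 6) := by
    intro g
    have := hucov (Set.mem_univ (Φ g))
    simp only [Set.mem_iUnion] at this
    obtain ⟨c, hc, hcc⟩ := this
    exact ⟨⟨c, hc⟩, hcc⟩
  choose f hf using hmem
  have hinj : Function.Injective f := by
    intro g h hgh'
    by_contra hne
    have h1 := hf g
    have h2 := hf h
    rw [hgh'] at h1
    have : dist (Φ g) (Φ h) < δ' / 3 := by
      have := dist_triangle (Φ g) ((f h : s → X)) (Φ h)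
      rw [Metric.mem_ball] at h1 h2
      rw [dist_comm] at h2
      linarith
    exact absurd (hsepΦ g h hne) (not_le.2 this)
  exact Finite.of_injective f hinj
end

section
/- Let G be a finitely generated group acting pointwise periodically by homeomorphisms on a compact, totally disconnected metric space X. Then the action is equicontinuous. -/
/-!
Pick a continuous map `e` from `X` to a finite discrete set whose fibres are `ε`-small (this is
where total disconnectedness enters), and a finite set `B ∋ 1` whose powers exhaust `G`. The heart
of the proof is that for some `n` the values `e (u • ξ)`, `u ∈ B ^ n`, already determine all the
values `e (g • ξ)`; equicontinuity then follows from uniform continuity of the finitely many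
maps `ξ ↦ e (u • ξ)`.

If no such `n` exists, there are `ξ, ζ` such that `e (g • ξ)` and `e (g • ζ)` first differ at
some `x ∈ B ^ m`, with `m` arbitrarily large. Let `(α, β)` be a cluster point of the pairs
`(x • ξ, x • ζ)`, so `e α ≠ e β`. The common stabilizer `K` of `α` and `β` has finite index `q`
(finite orbits). Two of the first `q + 1` prefixes of a word for `x` lie in the same right coset
of `K`; cutting out the segment between them gives `κ ∈ K`, from a finite set depending only on
`K`, with `κ * x ∈ B ^ (m - 1)`, so that `e (κ • x • ξ) = e (κ • x • ζ)`. In the limit `e (κ • α) = e (κ • β)`, that is `e α = e β`.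
-/

open Set Filter Topology MulAction
open scoped Pointwise

theorem Set.Finite.pow {M : Type*} [Monoid M] {s : Set M} (hs : s.Finite) :
    ∀ n : ℕ, (s ^ n).Finite
  | 0 => by simp
  | n + 1 => pow_succ s n ▸ (hs.pow n).mul hs

theorem Monoid.FG.exists_finite_forall_mem_pow (M : Type*) [Monoid M] [Monoid.FG M] :
    ∃ B : Set M, 1 ∈ B ∧ B.Finite ∧ ∀ g : M, ∃ n, g ∈ B ^ n := by
  obtain ⟨S, hS, hSfin⟩ := Monoid.fg_iff.mp ‹_›
  refine ⟨insert 1 S, mem_insert 1 S, hSfin.insert 1, fun g => ?_⟩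
  induction (hS ▸ Submonoid.mem_top g : g ∈ Submonoid.closure S) using
    Submonoid.closure_induction with
  | mem x hx => exact ⟨1, by simp [hx]⟩
  | one => exact ⟨0, by simp⟩
  | mul x y _ _ hx hy =>
    obtain ⟨m, hm⟩ := hx
    obtain ⟨n, hn⟩ := hy
    exact ⟨m + n, pow_add (insert 1 S) m n ▸ mul_mem_mul hm hn⟩

theorem MulAction.finiteIndex_stabilizer_of_finite_orbit {G X : Type*} [Group G] [MulAction G X]
    {x : X} (h : (orbit G x).Finite) : (stabilizer G x).FiniteIndex :=
  ⟨by rw [index_stabilizer]; exact ((Set.ncard_pos h).2 ⟨x, mem_orbit_self x⟩).ne'⟩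

theorem Subgroup.exists_mem_mul_mem_pow_lt {G : Type*} [Group G] {K : Subgroup G}
    [K.FiniteIndex] {B : Set G} (hB : 1 ∈ B) {n : ℕ} (hn : K.index ≤ n) {x : G}
    (hx : x ∈ B ^ n) :
    ∃ κ ∈ K, κ ∈ B ^ K.index * (B ^ K.index)⁻¹ ∧ ∃ m < n, κ * x ∈ B ^ m := by
  set q := K.index
  -- the `p i` need not be prefixes of a single word for `x`: any splittings will do
  have hsplit (i : Fin (q + 1)) : ∃ p ∈ B ^ (i : ℕ), ∃ s ∈ B ^ (n - i), p * s = x := by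
    rw [← Set.mem_mul, ← pow_add, Nat.add_sub_cancel' (by omega)]
    exact hx
  choose p hp s hs hps using hsplit
  obtain ⟨i, j, hne, hij⟩ : ∃ i j, i ≠ j ∧ p i * (p j)⁻¹ ∈ K := by
    by_contra! h
    have hinj : Function.Injective fun i => (QuotientGroup.mk (p i)⁻¹ : G ⧸ K) := fun i j hij => by
      by_contra hne
      exact h i j hne (by simpa using QuotientGroup.eq.mp hij)
    have := Nat.card_le_card_of_injective _ hinj
    simp [q, Subgroup.index] at this
  wlog hlt : i < j generalizing i j
  · exact this j i hne.symm (by simpa using K.inv_mem hij) (by omega)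
  refine ⟨p i * (p j)⁻¹, hij,
    mul_mem_mul (pow_subset_pow_right hB (by omega) (hp i))
      (inv_mem_inv.mpr (pow_subset_pow_right hB (by omega) (hp j))),
    i + (n - j), by omega, ?_⟩
  rw [← hps j, mul_assoc, inv_mul_cancel_left, pow_add]
  exact mul_mem_mul (hp i) (hs j)

theorem isClopen_setOf_eq_of_discreteTopology {Y C : Type*} [TopologicalSpace Y]
    [TopologicalSpace C] [DiscreteTopology C] {φ ψ : Y → C} (hφ : Continuous φ)
    (hψ : Continuous ψ) : IsClopen {y | φ y = ψ y} :=
  (isClopen_discrete {c : C × C | c.1 = c.2}).preimage (hφ.prodMk hψ)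

theorem Metric.exists_continuous_fin_dist_lt_of_eq {X : Type*} [MetricSpace X] [CompactSpace X]
    [TotallyDisconnectedSpace X] {ε : ℝ} (hε : 0 < ε) :
    ∃ (k : ℕ) (e : X → Fin k), Continuous e ∧ ∀ x y, e x = e y → dist x y < ε := by
  obtain ⟨k, e, r, he, hr⟩ := (ContinuousMap.id X).exists_finite_approximation_of_mem_nhds_diagonal
    (nhdsSet_diagonal_le_uniformity (Metric.dist_mem_uniformity (half_pos hε)))
  refine ⟨k, e, he, fun x y hxy => ?_⟩
  have hx : dist x (r (e x)) < ε / 2 := hr x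
  have hy : dist y (r (e x)) < ε / 2 := hxy ▸ hr y
  linarith [dist_triangle_right x y (r (e x))]

section OrbitCode

variable {G X C : Type*} [Group G] [MulAction G X] {f : X → C} {B : Set G}

/-- The pair is `(x • ξ, x • ζ)` for `x` of minimal `B`-length with `f (x • ξ) ≠ f (x • ζ)`. -/
theorem exists_pair_ne_forall_finiteIndex_exists_eq_smul (hB : 1 ∈ B)
    (hgen : ∀ g : G, ∃ n, g ∈ B ^ n) {ξ ζ : X} {n : ℕ}
    (hagree : ∀ u ∈ B ^ n, f (u • ξ) = f (u • ζ)) {g : G} (hg : f (g • ξ) ≠ f (g • ζ)) :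
    ∃ a b : X, f a ≠ f b ∧ ∀ (K : Subgroup G) [K.FiniteIndex], K.index ≤ n →
      ∃ κ ∈ K, κ ∈ B ^ K.index * (B ^ K.index)⁻¹ ∧ f (κ • a) = f (κ • b) := by
  classical
  obtain ⟨m, hm⟩ := hgen g
  have hex : ∃ m, ∃ x ∈ B ^ m, f (x • ξ) ≠ f (x • ζ) := ⟨m, g, hm, hg⟩
  obtain ⟨x, hx, hfx⟩ := Nat.find_spec hex
  have hmin (k : ℕ) (hk : k < Nat.find hex) (u : G) (hu : u ∈ B ^ k) :
      f (u • ξ) = f (u • ζ) := by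
    by_contra h
    exact Nat.find_min hex hk ⟨u, hu, h⟩
  have hnm : n < Nat.find hex := by
    by_contra! h
    exact hfx (hagree x (pow_subset_pow_right hB h hx))
  refine ⟨x • ξ, x • ζ, hfx, fun K _ hK => ?_⟩
  obtain ⟨κ, hκK, hκB, k, hk, hκx⟩ := K.exists_mem_mul_mem_pow_lt hB (hK.trans hnm.le) hx
  exact ⟨κ, hκK, hκB, by simpa only [smul_smul] using hmin k hk _ hκx⟩

variable [TopologicalSpace X] [ContinuousConstSMul G X] [TopologicalSpace C] [DiscreteTopology C]

theorem isClopen_setOf_comp_smul_eq (hf : Continuous f) (u : G) :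
    IsClopen {p : X × X | f (u • p.1) = f (u • p.2)} :=
  isClopen_setOf_eq_of_discreteTopology (hf.comp ((continuous_const_smul u).comp continuous_fst))
    (hf.comp ((continuous_const_smul u).comp continuous_snd))

theorem exists_forall_mem_pow_eq_imp_forall_eq [CompactSpace X]
    (hfin : ∀ x : X, (orbit G x).Finite) (hf : Continuous f) (hB : 1 ∈ B) (hBfin : B.Finite)
    (hgen : ∀ g : G, ∃ n, g ∈ B ^ n) :
    ∃ n, ∀ ξ ζ : X, (∀ u ∈ B ^ n, f (u • ξ) = f (u • ζ)) → ∀ g : G, f (g • ξ) = f (g • ζ) := by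
  by_contra! h
  choose ξ ζ hagree g hg using h
  choose a b hab hshort using fun n =>
    exists_pair_ne_forall_finiteIndex_exists_eq_smul hB hgen (hagree n) (hg n)
  obtain ⟨⟨α, β⟩, -, hcl⟩ := isCompact_univ.exists_mapClusterPt (f := atTop)
    (u := fun n => (a n, b n)) (by simp)
  have hαβ : f α ≠ f β :=
    (isClopen_setOf_eq_of_discreteTopology (hf.comp continuous_fst)
      (hf.comp continuous_snd)).compl.isClosed.mem_of_mapClusterPt hcl (Eventually.of_forall hab)
  have := finiteIndex_stabilizer_of_finite_orbit (hfin α)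
  have := finiteIndex_stabilizer_of_finite_orbit (hfin β)
  set K := stabilizer G α ⊓ stabilizer G β
  set F := (K : Set G) ∩ (B ^ K.index * (B ^ K.index)⁻¹)
  set E := ⋃ κ ∈ F, {p : X × X | f (κ • p.1) = f (κ • p.2)}
  have hE : IsClosed E :=
    (((hBfin.pow _).mul (hBfin.pow _).inv).inter_of_right _).isClosed_biUnion
      fun κ _ => (isClopen_setOf_comp_smul_eq hf κ).isClosed
  have hev : ∀ᶠ n in atTop, (a n, b n) ∈ E := by
    filter_upwards [eventually_ge_atTop K.index] with n hn
    obtain ⟨κ, hκK, hκB, hκ⟩ := hshort n K hn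
    exact mem_iUnion₂.mpr ⟨κ, ⟨hκK, hκB⟩, hκ⟩
  obtain ⟨κ, hκF, hκ⟩ := mem_iUnion₂.mp (hE.mem_of_mapClusterPt hcl hev)
  obtain ⟨hκα, hκβ⟩ := Subgroup.mem_inf.mp hκF.1
  exact hαβ (by simpa [mem_stabilizer_iff.mp hκα, mem_stabilizer_iff.mp hκβ] using hκ)

theorem setOf_forall_mem_eq_smul_mem_nhdsSet_diagonal (hf : Continuous f) {A : Set G}
    (hA : A.Finite) : {p : X × X | ∀ u ∈ A, f (u • p.1) = f (u • p.2)} ∈ 𝓝ˢ (diagonal X) := by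
  have hopen : IsOpen {p : X × X | ∀ u ∈ A, f (u • p.1) = f (u • p.2)} := by
    simp only [ofPred_forall]
    exact hA.isOpen_biInter fun u _ => (isClopen_setOf_comp_smul_eq hf u).isOpen
  exact hopen.mem_nhdsSet.mpr fun p (hp : p.1 = p.2) u _ => by rw [hp]

end OrbitCode

theorem stmt_13 {G X : Type*} [Group G] [Group.FG G] [MetricSpace X] [CompactSpace X]
    [TotallyDisconnectedSpace X]
    [MulAction G X] (hc : ∀ g : G, Continuous fun x : X => g • x)
    (hpp : ∀ x : X, (MulAction.orbit G x).Finite) :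
    ∀ ε > (0 : ℝ), ∃ δ > (0 : ℝ), ∀ x y : X, dist x y < δ →
      ∀ g : G, dist (g • x) (g • y) < ε := by
  intro ε hε
  have : ContinuousConstSMul G X := ⟨hc⟩
  obtain ⟨k, e, he, heε⟩ := Metric.exists_continuous_fin_dist_lt_of_eq (X := X) hε
  obtain ⟨B, hB, hBfin, hgen⟩ := Monoid.FG.exists_finite_forall_mem_pow G
  obtain ⟨n, hn⟩ := exists_forall_mem_pow_eq_imp_forall_eq hpp he hB hBfin hgen
  obtain ⟨δ, hδ, hclose⟩ := Metric.mem_uniformity_dist.mp <| nhdsSet_diagonal_eq_uniformity.ge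
    (setOf_forall_mem_eq_smul_mem_nhdsSet_diagonal he (hBfin.pow n))
  exact ⟨δ, hδ, fun x y hxy g => heε _ _ (hn x y (hclose hxy) g)⟩
end

section
/- For every k ∈ ℕ there exists N_k ∈ ℕ such that: for every semigroup M generated by a finite set S with |S| ≤ k, there is a map m ↦ [m] from S^{N_k} to S^{<N_k} such that for every right action of M on any set Y and every y ∈ Y whose orbit y·M has cardinality at most k, one has y·m = y·[m] for all m ∈ S^{N_k}. -/
open scoped Pointwise

lemma mem_spow_succ_iff {M : Type*} [Semigroup M] (S : Set M) :
    ∀ (n : ℕ) (m : M), m ∈ spow S (n + 1) ↔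
      ∃ x l, x ∈ S ∧ (∀ a ∈ l, a ∈ S) ∧ List.length l = n ∧ m = List.foldl (· * ·) x l := by
  intro n
  induction n with
  | zero =>
    intro m
    constructor
    · intro h; exact ⟨m, [], h, by simp, rfl, rfl⟩
    · rintro ⟨x, l, hx, _, hl, rfl⟩
      rw [List.length_eq_zero_iff] at hl; subst hl; simpa [spow]
  | succ n ih =>
    intro m
    constructor
    · intro hm
      rw [show spow S (n + 2) = spow S (n + 1) * S from rfl, Set.mem_mul] at hm
      obtain ⟨p, hp, s, hs, rfl⟩ := hm
      obtain ⟨x, l, hx, hl, hlen, rfl⟩ := (ih p).1 hp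
      refine ⟨x, l ++ [s], hx, ?_, by simp [hlen], by simp [List.foldl_append]⟩
      intro a ha
      rcases List.mem_append.1 ha with h | h
      · exact hl a h
      · simp at h; subst h; exact hs
    · rintro ⟨x, l, hx, hl, hlen, rfl⟩
      rcases l.eq_nil_or_concat with rfl | ⟨l', s, rfl⟩
      · simp at hlen
      · rw [show spow S (n + 2) = spow S (n + 1) * S from rfl, Set.mem_mul]
        refine ⟨List.foldl (· * ·) x l', ?_, s, hl s (by simp), by simp [List.foldl_append]⟩
        refine (ih _).2 ⟨x, l', hx, fun a ha => hl a (by simp [ha]), ?_, rfl⟩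
        simpa using hlen

lemma act_foldl {M Y : Type*} [Semigroup M] (act : Y → M → Y)
    (hact : ∀ (y : Y) (m n : M), act (act y m) n = act y (m * n)) :
    ∀ (l : List M) (x : M) (y : Y),
      act y (List.foldl (· * ·) x l) = List.foldl act (act y x) l := by
  intro l
  induction l with
  | nil => intro x y; rfl
  | cons a l ih => intro x y; simp only [List.foldl_cons]; rw [ih, hact]

abbrev Cfg (k : ℕ) : Type := (Fin (k + 1) → Fin (k + 1) → Fin (k + 1)) × Fin (k + 1)

def Nk (k : ℕ) : ℕ := Fintype.card (Cfg k → Fin (k + 1)) + 1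

def crun {k : ℕ} (c : Cfg k) (t : Fin (k + 1)) (U : List (Fin (k + 1))) : Fin (k + 1) :=
  U.foldl (fun t a => c.1 a t) t

lemma key {M : Type} [Semigroup M] {k : ℕ} (S : Finset M) (hS : S.card ≤ k)
    (m : M) (hm : m ∈ spow (S : Set M) (Nk k)) :
    ∃ m', (∃ n < Nk k, m' ∈ spow (S : Set M) n) ∧
      ∀ (Y : Type) (act : Y → M → Y),
        (∀ (y : Y) (m n : M), act (act y m) n = act y (m * n)) →
        ∀ y : Y, {z : Y | ∃ m : M, act y m = z}.Finite →
          {z : Y | ∃ m : M, act y m = z}.ncard ≤ k →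
          act y m = act y m' := by
  classical
  have hNk : Nk k = Fintype.card (Cfg k → Fin (k + 1)) + 1 := rfl
  obtain ⟨x, l, hx, hl, hlen, rfl⟩ := (mem_spow_succ_iff (S : Set M) _ m).1 hm
  -- embedding of S into Fin (k+1)
  obtain ⟨emb⟩ : Nonempty ({a // a ∈ S} ↪ Fin (k + 1)) := by
    have h1 : Fintype.card {a // a ∈ S} ≤ Fintype.card (Fin (k + 1)) := by
      simp only [Fintype.card_coe, Fintype.card_fin]; omega
    exact ⟨(Fintype.truncEquivFin _).out.toEmbedding.trans
      (Fin.castLEEmb (by simpa [Fintype.card_coe] using h1))⟩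
  set sym : M → Fin (k + 1) := fun a => if h : a ∈ S then emb ⟨a, h⟩ else 0 with hsym
  set U : List (Fin (k + 1)) := (x :: l).map sym with hU
  have hUlen : U.length = Nk k := by simp [hU, hlen, Nk]
  set F : Fin (Nk k) → (Cfg k → Fin (k + 1)) :=
    fun i c => crun c c.2 (U.take (i.1 + 1)) with hF
  obtain ⟨i, j, hij, hFij⟩ : ∃ i j : Fin (Nk k), i.1 < j.1 ∧ F i = F j := by
    obtain ⟨a, b, hne, hab⟩ := Fintype.exists_ne_map_eq_of_card_lt F
      (by simp [Nk])
    rcases (Fin.val_ne_iff.2 hne).lt_or_gt with h | h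
    · exact ⟨a, b, h, hab⟩
    · exact ⟨b, a, h, hab.symm⟩
  have hiT : i.1 < Fintype.card (Cfg k → Fin (k + 1)) + 1 := i.2
  have hjT : j.1 < Fintype.card (Cfg k → Fin (k + 1)) + 1 := j.2
  set l' : List M := l.take i.1 ++ l.drop j.1 with hl'
  refine ⟨List.foldl (· * ·) x l', ⟨l'.length + 1, ?_, ?_⟩, ?_⟩
  · have : l'.length = min i.1 l.length + (l.length - j.1) := by simp [hl']
    rw [this, hlen]
    omega
  · exact (mem_spow_succ_iff (S : Set M) _ _).2 ⟨x, l', hx, fun a ha => by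
      rcases List.mem_append.1 ha with h | h
      · exact hl a (List.mem_of_mem_take h)
      · exact hl a (List.mem_of_mem_drop h), rfl, rfl⟩
  · intro Y act hact y hfin hcard
    set O : Set Y := {z : Y | ∃ m : M, act y m = z} with hO
    set Z : Set Y := insert y O with hZ
    have hZfin : Z.Finite := hfin.insert y
    haveI := hZfin.fintype
    have hyZ : y ∈ Z := Set.mem_insert _ _
    have hclose : ∀ z ∈ Z, ∀ s ∈ S, act z s ∈ Z := by
      intro z hz s _
      rcases hz with rfl | ⟨m0, hm0⟩
      · exact Or.inr ⟨s, rfl⟩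
      · exact Or.inr ⟨m0 * s, by rw [← hact, hm0]⟩
    obtain ⟨eZ⟩ : Nonempty (Z ↪ Fin (k + 1)) := by
      have h1 : Fintype.card Z ≤ k + 1 := by
        rw [← Nat.card_eq_fintype_card, Nat.card_coe_set_eq]
        exact le_trans (Set.ncard_insert_le _ _) (by omega)
      exact ⟨(Fintype.truncEquivFin _).out.toEmbedding.trans (Fin.castLEEmb h1)⟩
    set actZ : Z → {a // a ∈ S} → Z :=
      fun z s => ⟨act z.1 s.1, hclose z.1 z.2 s.1 s.2⟩ with hactZ
    set g : Fin (k + 1) → Fin (k + 1) → Fin (k + 1) := fun a t =>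
      if h : (∃ s : {a // a ∈ S}, emb s = a) ∧ ∃ z : Z, eZ z = t
      then eZ (actZ h.2.choose h.1.choose) else t with hg
    set c : Cfg k := (g, eZ ⟨y, hyZ⟩) with hc
    have hstep : ∀ (a : M) (ha : a ∈ S) (z : Y) (hz : z ∈ Z),
        g (sym a) (eZ ⟨z, hz⟩) = eZ ⟨act z a, hclose z hz a ha⟩ := by
      intro a ha z hz
      have hsa : sym a = emb ⟨a, ha⟩ := by simp only [hsym]; rw [dif_pos ha]
      have hcond : (∃ s : {a' // a' ∈ S}, emb s = sym a) ∧ ∃ z' : Z, eZ z' = eZ ⟨z, hz⟩ :=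
        ⟨⟨⟨a, ha⟩, hsa.symm⟩, ⟨⟨z, hz⟩, rfl⟩⟩
      rw [hg]
      simp only [dif_pos hcond]
      have h1 : hcond.1.choose = ⟨a, ha⟩ := emb.injective (by rw [hcond.1.choose_spec, hsa])
      have h2 : hcond.2.choose = ⟨z, hz⟩ := eZ.injective hcond.2.choose_spec
      rw [h1, h2]
    have hrun : ∀ (L0 : List M), (∀ a ∈ L0, a ∈ S) → ∀ (z : Y) (hz : z ∈ Z),
        ∃ hz' : List.foldl act z L0 ∈ Z,
          crun c (eZ ⟨z, hz⟩) (L0.map sym) = eZ ⟨List.foldl act z L0, hz'⟩ := by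
      intro L0
      induction L0 with
      | nil => intro _ z hz; exact ⟨hz, rfl⟩
      | cons a L0 ih =>
        intro hmem z hz
        have ha : a ∈ S := hmem a (by simp)
        have hz2 : act z a ∈ Z := hclose z hz a ha
        obtain ⟨hz', heq⟩ := ih (fun b hb => hmem b (by simp [hb])) (act z a) hz2
        refine ⟨hz', ?_⟩
        show crun c (c.1 (sym a) (eZ ⟨z, hz⟩)) (L0.map sym) = _
        rw [show c.1 = g from rfl, hstep a ha z hz]
        exact heq
    -- apply the coincidence at config c
    have htake : ∀ (n : ℕ), U.take n = ((x :: l).take n).map sym := by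
      intro n; rw [hU, List.map_take]
    have hPi := hrun ((x :: l).take (i.1 + 1))
      (fun a ha => by
        rcases List.mem_cons.1 (List.mem_of_mem_take ha) with h | h
        · exact h ▸ hx
        · exact hl a h) y hyZ
    have hPj := hrun ((x :: l).take (j.1 + 1))
      (fun a ha => by
        rcases List.mem_cons.1 (List.mem_of_mem_take ha) with h | h
        · exact h ▸ hx
        · exact hl a h) y hyZ
    obtain ⟨hPiZ, hPieq⟩ := hPi
    obtain ⟨hPjZ, hPjeq⟩ := hPj
    have hFc := congrFun hFij c
    rw [hF] at hFc
    simp only at hFc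
    rw [htake (i.1+1), htake (j.1+1)] at hFc
    rw [hPieq, hPjeq] at hFc
    have hfold : List.foldl act y ((x :: l).take (i.1 + 1)) =
        List.foldl act y ((x :: l).take (j.1 + 1)) := by
      have := eZ.injective hFc
      exact congrArg Subtype.val this
    -- now conclude
    rw [act_foldl act hact, act_foldl act hact]
    show List.foldl act y (x :: l) = List.foldl act y (x :: l')
    have hsplit : (x :: l) = (x :: l).take (j.1 + 1) ++ (x :: l).drop (j.1 + 1) :=
      (List.take_append_drop _ _).symm
    have hxl' : (x :: l') = (x :: l).take (i.1 + 1) ++ (x :: l).drop (j.1 + 1) := by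
      simp [hl', List.take_succ_cons, List.drop_succ_cons]
    conv_lhs => rw [hsplit]
    rw [hxl', List.foldl_append, List.foldl_append, ← hfold]

theorem stmt_15 : ∀ k : ℕ, ∃ N : ℕ, 0 < N ∧
    ∀ (M : Type) (_ : Semigroup M) (S : Finset M),
      (∀ m : M, ∃ n : ℕ, m ∈ spow (S : Set M) n) → S.card ≤ k →
      ∃ f : M → M,
        (∀ m ∈ spow (S : Set M) N, ∃ n < N, f m ∈ spow (S : Set M) n) ∧
        ∀ (Y : Type) (act : Y → M → Y),
          (∀ (y : Y) (m n : M), act (act y m) n = act y (m * n)) →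
          ∀ y : Y, {z : Y | ∃ m : M, act y m = z}.Finite →
            {z : Y | ∃ m : M, act y m = z}.ncard ≤ k →
            ∀ m ∈ spow (S : Set M) N, act y m = act y (f m) := by
  intro k
  refine ⟨Nk k, Nat.succ_pos _, ?_⟩
  intro M instM S _ hS
  classical
  letI := instM
  refine ⟨fun m => if h : m ∈ spow (S : Set M) (Nk k) then (key S hS m h).choose else m,
    ?_, ?_⟩
  · intro m hm
    simp only [dif_pos hm]
    exact (key S hS m hm).choose_spec.1
  · intro Y act hact y hfin hcard m hm
    simp only [dif_pos hm]
    exact (key S hS m hm).choose_spec.2 Y act hact y hfin hcard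
end

section
/- Let G be a countable group acting by homeomorphisms on a compact metric space X. If the induced action of G on the Banach space C(X) of continuous real-valued functions (by g·f = f ∘ g⁻¹) is pointwise periodic, then the action of G on X is periodic: some finite-index subgroup of G acts trivially on X. -/
/-!
For a continuous linear action of a countable group on a Banach space, some vector `v` is fixed by
no element that acts nontrivially: otherwise the space would be the countable union of the closed
fixed subspaces of those elements, and by Baire one of them would be the whole space. The
stabilizer of `v` then lies in the kernel of the action, and it has finite index because the orbit
of `v` is finite. Since continuous functions separate the points of `X`, an element acting
trivially on `C(X)` acts trivially on `X`.
-/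

open Set

theorem Submodule.exists_eq_top_of_iUnion_eq_univ {𝕜 E ι : Type*} [NontriviallyNormedField 𝕜]
    [AddCommGroup E] [TopologicalSpace E] [BaireSpace E] [Module 𝕜 E] [ContinuousAdd E]
    [ContinuousSMul 𝕜 E] [Countable ι] {p : ι → Submodule 𝕜 E}
    (hp : ∀ i, IsClosed (p i : Set E)) (hU : ⋃ i, (p i : Set E) = univ) : ∃ i, p i = ⊤ :=
  let ⟨i, hi⟩ := nonempty_interior_of_iUnion_of_closed hp hU
  ⟨i, (p i).eq_top_of_nonempty_interior' hi⟩

namespace MonoidHom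

variable {𝕜 G E : Type*} [NontriviallyNormedField 𝕜] [Group G] [Countable G]
  [AddCommGroup E] [TopologicalSpace E] [T2Space E] [BaireSpace E] [Module 𝕜 E]
  [ContinuousAdd E] [ContinuousSMul 𝕜 E] (ρ : G →* (E →L[𝕜] E))

theorem exists_forall_apply_eq_self_imp_mem_ker : ∃ v : E, ∀ g, ρ g v = v → g ∈ ρ.ker := by
  by_contra! h
  choose g hgv hg using h
  obtain ⟨⟨k, hk⟩, htop⟩ := Submodule.exists_eq_top_of_iUnion_eq_univ
    (p := fun k : {k : G // k ∉ ρ.ker} => LinearMap.eqLocus (ρ k : E →ₗ[𝕜] E) LinearMap.id)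
    (fun k => isClosed_eq (ρ k).continuous continuous_id)
    (eq_univ_of_forall fun v => mem_iUnion.2 ⟨⟨g v, hg v⟩, hgv v⟩)
  exact hk (ContinuousLinearMap.ext fun v => (htop ▸ Submodule.mem_top :
    v ∈ LinearMap.eqLocus (ρ k : E →ₗ[𝕜] E) LinearMap.id))

theorem ker_finiteIndex_of_finite_orbits (h : ∀ v : E, (Set.range fun g => ρ g v).Finite) :
    ρ.ker.FiniteIndex := by
  let := MulAction.compHom E ρ
  obtain ⟨v, hv⟩ := ρ.exists_forall_apply_eq_self_imp_mem_ker
  have : (MulAction.stabilizer G v).FiniteIndex :=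
    ⟨by rw [MulAction.index_stabilizer]; exact ((Set.ncard_pos (h v)).2 ⟨v, 1, one_smul G v⟩).ne'⟩
  exact Subgroup.finiteIndex_of_le fun g hg => hv g (MulAction.mem_stabilizer_iff.1 hg)

end MonoidHom

section Koopman

variable (G X R M : Type*) [Group G] [TopologicalSpace X] [MulAction G X]
  [ContinuousConstSMul G X] [Semiring R] [TopologicalSpace M] [AddCommMonoid M] [Module R M]
  [ContinuousAdd M] [ContinuousConstSMul R M]

def koopmanRep : G →* (C(X, M) →L[R] C(X, M)) where
  toFun g := ContinuousMap.compCLM R M ⟨(g⁻¹ • ·), continuous_const_smul g⁻¹⟩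
  map_one' := by ext; simp
  map_mul' g h := by ext; simp [mul_smul]

variable {G X R M}

@[simp]
theorem koopmanRep_apply_apply (g : G) (f : C(X, M)) (x : X) :
    koopmanRep G X R M g f x = f (g⁻¹ • x) := rfl

theorem koopmanRep_ker_le_fixingSubgroup [T35Space X] :
    (koopmanRep G X ℝ ℝ).ker ≤ fixingSubgroup G (univ : Set X) := by
  rintro g hg ⟨x, -⟩
  by_contra hne
  obtain ⟨f, hf, hfx⟩ := separatesPoints_continuous_of_t35Space hne
  have hfix : f x = f (g • x) := by
    simpa using DFunLike.congr_fun (DFunLike.congr_fun (MonoidHom.mem_ker.1 hg) ⟨f, hf⟩) (g • x)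
  exact hfx hfix.symm

end Koopman

theorem stmt_19 {G X : Type*} [Group G] [Countable G] [MetricSpace X] [CompactSpace X]
    [MulAction G X] (hc : ∀ g : G, Continuous fun x : X => g • x)
    (hpp : ∀ f : C(X, ℝ), {h : C(X, ℝ) | ∃ g : G, ∀ x : X, h x = f (g⁻¹ • x)}.Finite) :
    ∃ H : Subgroup G, H.FiniteIndex ∧ ∀ h ∈ H, ∀ x : X, h • x = x := by
  have : ContinuousConstSMul G X := ⟨hc⟩
  have horbits (f : C(X, ℝ)) : (range fun g => koopmanRep G X ℝ ℝ g f).Finite :=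
    (hpp f).subset <| by rintro _ ⟨g, rfl⟩; exact ⟨g, fun x => rfl⟩
  have := (koopmanRep G X ℝ ℝ).ker_finiteIndex_of_finite_orbits horbits
  exact ⟨_, Subgroup.finiteIndex_of_le koopmanRep_ker_le_fixingSubgroup,
    fun h hh x => hh ⟨x, mem_univ x⟩⟩
end
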